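/- arXiv:2102.10174 — 4 statements merged into one kernel-verified Lean document; each statement's English description precedes it below -/
import Mathlib

section
/- For every fixed integer f ≥ 1 there exists a constant c_f > 0 such that for every integer σ ≥ 1 there are infinitely many n for which there exist a finite simple undirected unweighted graph G on n vertices and a set S of σ vertices of G such that every f-FT S×V distance preserver of G has at least c_f · n^{2 − 1/(f+1)} · σ^{1/(f+1)} edges. -/
open SimpleGraph

/-- A *tiebreaking scheme* on `G`: it assigns to each ordered pair `(s, t)` of vertices with
`s` and `t` connected in `G` a single shortest `s`–`t` path in `G`. -/
structure TieBreaking {V : Type*} (G : SimpleGraph V) where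
  path : ∀ s t : V, G.Reachable s t → G.Walk s t
  isPath : ∀ s t h, (path s t h).IsPath
  length_eq : ∀ s t h, (path s t h).length = G.dist s t

/-- A tiebreaking scheme is *symmetric* if `π(s,t)` is the reverse of `π(t,s)`. -/
def TieBreaking.Symm {V : Type*} {G : SimpleGraph V} (π : TieBreaking G) : Prop :=
  ∀ s t (h : G.Reachable s t), π.path t s h.symm = (π.path s t h).reverse

/-- A tiebreaking scheme is *consistent* if whenever `u` precedes `v` on `π(s,t)`,
the path `π(u,v)` is a contiguous subpath of `π(s,t)`. -/
def TieBreaking.Consistent {V : Type*} {G : SimpleGraph V} (π : TieBreaking G) : Prop :=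
  ∀ s t (h : G.Reachable s t) (u v : V) (q : G.Walk s u) (r : G.Walk u v) (r' : G.Walk v t),
    π.path s t h = q.append (r.append r') →
    ∃ (q₂ : G.Walk s u) (r₂ : G.Walk v t),
      π.path s t h = q₂.append ((π.path u v r.reachable).append r₂)

/-- A *replacement path tiebreaking scheme* (RPTS) on `G`: it assigns to each ordered pair
`(s, t)` of vertices and each edge set `F` with `s` and `t` connected in `G \ F` a single
shortest `s`–`t` path in `G \ F`. -/
structure RPTS {V : Type*} (G : SimpleGraph V) where
  path : ∀ (s t : V) (F : Set (Sym2 V)), (G.deleteEdges F).Reachable s t →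
    (G.deleteEdges F).Walk s t
  isPath : ∀ s t F h, (path s t F h).IsPath
  length_eq : ∀ s t F h, (path s t F h).length = (G.deleteEdges F).dist s t

/-- An RPTS is *consistent* if for every `F`, whenever `u` precedes `v` on `π(s,t|F)`,
the path `π(u,v|F)` is a contiguous subpath of `π(s,t|F)`. -/
def RPTS.Consistent {V : Type*} {G : SimpleGraph V} (π : RPTS G) : Prop :=
  ∀ (s t : V) (F : Set (Sym2 V)) (h : (G.deleteEdges F).Reachable s t) (u v : V)
    (q : (G.deleteEdges F).Walk s u) (r : (G.deleteEdges F).Walk u v)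
    (r' : (G.deleteEdges F).Walk v t),
    π.path s t F h = q.append (r.append r') →
    ∃ (q₂ : (G.deleteEdges F).Walk s u) (r₂ : (G.deleteEdges F).Walk v t),
      π.path s t F h = q₂.append ((π.path u v F r.reachable).append r₂)

/-- An RPTS is *stable* if for every edge `e` not lying on `π(s,t|F)` (such that `s,t` are
still connected in `G \ (F ∪ {e})`), we have `π(s,t|F ∪ {e}) = π(s,t|F)`. -/
def RPTS.Stable {V : Type*} {G : SimpleGraph V} (π : RPTS G) : Prop :=
  ∀ (s t : V) (F : Set (Sym2 V)) (e : Sym2 V)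
    (h : (G.deleteEdges F).Reachable s t)
    (h' : (G.deleteEdges (F ∪ {e})).Reachable s t),
    e ∉ (π.path s t F h).edges →
    ∃ hp : ∀ e' ∈ (π.path s t F h).edges, e' ∈ (G.deleteEdges (F ∪ {e})).edgeSet,
      (π.path s t F h).transfer (G.deleteEdges (F ∪ {e})) hp = π.path s t (F ∪ {e}) h'

/-- An RPTS is *symmetric* if `π(s,t|F)` is the reverse of `π(t,s|F)`. -/
def RPTS.Symm {V : Type*} {G : SimpleGraph V} (π : RPTS G) : Prop :=
  ∀ s t F (h : (G.deleteEdges F).Reachable s t),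
    π.path t s F h.symm = (π.path s t F h).reverse

/-- An RPTS is *restorable* if for all `s, t` and nonempty fault sets `F` with `s,t` connected
in `G \ F`, there are a vertex `x` and a proper subset `F' ⊊ F` such that the concatenation of
`π(s,x|F')` with the reverse of `π(t,x|F')` avoids all edges of `F` and has length
`dist_{G \ F}(s,t)`. -/
def RPTS.Restorable {V : Type*} {G : SimpleGraph V} (π : RPTS G) : Prop :=
  ∀ (s t : V) (F : Set (Sym2 V)), F.Nonempty → (G.deleteEdges F).Reachable s t →
    ∃ (x : V) (F' : Set (Sym2 V)) (_ : F' ⊂ F)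
      (h1 : (G.deleteEdges F').Reachable s x)
      (h2 : (G.deleteEdges F').Reachable t x),
      (∀ e ∈ ((π.path s x F' h1).append (π.path t x F' h2).reverse).edges, e ∉ F) ∧
      ((π.path s x F' h1).append (π.path t x F' h2).reverse).length
        = (G.deleteEdges F).dist s t

/-- The edge set of the subgraph of `G` formed by overlaying all `S × V` replacement paths of
the RPTS `π` under at most `f` faults. -/
def overlayEdges {V : Type*} {G : SimpleGraph V} (π : RPTS G) (S : Set V) (f : ℕ) :
    Set (Sym2 V) :=
  {e | ∃ (s : V) (_ : s ∈ S) (v : V) (F : Set (Sym2 V)) (_ : F ⊆ G.edgeSet)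
    (_ : F.ncard ≤ f) (h : (G.deleteEdges F).Reachable s v), e ∈ (π.path s v F h).edges}

/-- `H` is an `f`-FT `S × T` distance preserver of `G`. -/
def IsFTPreserver {V : Type*} (G H : SimpleGraph V) (S T : Set V) (f : ℕ) : Prop :=
  H ≤ G ∧ ∀ F : Set (Sym2 V), F ⊆ G.edgeSet → F.ncard ≤ f → ∀ s ∈ S, ∀ t ∈ T,
    ((H.deleteEdges F).Reachable s t ↔ (G.deleteEdges F).Reachable s t) ∧
    ((G.deleteEdges F).Reachable s t →
      (H.deleteEdges F).dist s t = (G.deleteEdges F).dist s t)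

/-- `H` is an `f`-FT `+k` additive spanner of `G`. -/
def IsFTAddSpanner {V : Type*} (G H : SimpleGraph V) (f k : ℕ) : Prop :=
  H ≤ G ∧ ∀ F : Set (Sym2 V), F ⊆ G.edgeSet → F.ncard ≤ f → ∀ s t : V,
    (G.deleteEdges F).Reachable s t →
    (H.deleteEdges F).Reachable s t ∧
      (H.deleteEdges F).dist s t ≤ (G.deleteEdges F).dist s t + k

namespace St10

structure Gadget (f q : ℕ) where
  V : Type
  finV : Finite V
  G : SimpleGraph V
  s : V
  exit : (Fin f → Fin q) → V
  exit_inj : Function.Injective exit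
  sel : (Fin f → Fin q) → Set (Sym2 V)
  sel_sub : ∀ k, sel k ⊆ G.edgeSet
  sel_card : ∀ k, (sel k).ncard ≤ f
  m : (Fin f → Fin q) → ℕ
  D : ℕ
  m_le : ∀ k, m k ≤ D
  mwalk : ∀ k, ∃ p : (G.deleteEdges (sel k)).Walk s (exit k), p.length = m k
  phi : (Fin f → Fin q) → V → ℕ
  phi_s : ∀ k, phi k s = 0
  phi_lip : ∀ k u v, G.Adj u v → s(u,v) ∉ sel k → phi k v ≤ phi k u + 1
  phi_exit : ∀ k, phi k (exit k) = m k
  phi_gap : ∀ k j, j ≠ k → m k + 2 ≤ phi k (exit j)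

lemma phi_le_of_walk {V : Type*} {G : SimpleGraph V} (Φ : V → ℕ)
    (hlip : ∀ u v, G.Adj u v → Φ v ≤ Φ u + 1) :
    ∀ {u v : V} (p : G.Walk u v), Φ v ≤ Φ u + p.length := by
  intro u v p
  induction p with
  | nil => simp
  | @cons a b c h p ih =>
    calc Φ c ≤ Φ b + p.length := ih
    _ ≤ (Φ a + 1) + p.length := by have := hlip a b h; omega
    _ = Φ a + (Walk.cons h p).length := by simp [Walk.length_cons]; omega

lemma exists_chain_walk {V : Type*} {G : SimpleGraph V} (g : ℕ → V) :
    ∀ (i : ℕ), (∀ j, j < i → G.Adj (g j) (g (j+1))) →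
    ∃ p : G.Walk (g 0) (g i), p.length = i := by
  intro i
  induction i with
  | zero => exact fun _ => ⟨Walk.nil, rfl⟩
  | succ n ih =>
    intro h
    obtain ⟨p, hp⟩ := ih (fun j hj => h j (hj.trans (Nat.lt_succ_self n)))
    exact ⟨p.concat (h n (Nat.lt_succ_self n)), by simp [Walk.length_concat, hp]⟩

def baseGadget (q : ℕ) : Gadget 0 q where
  V := PUnit
  finV := inferInstance
  G := ⊥
  s := PUnit.unit
  exit := fun _ => PUnit.unit
  exit_inj := fun a b _ => funext fun i => i.elim0
  sel := fun _ => ∅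
  sel_sub := by simp
  sel_card := by simp
  m := fun _ => 0
  D := 0
  m_le := by simp
  mwalk := fun k => ⟨Walk.nil, rfl⟩
  phi := fun _ _ => 0
  phi_s := fun _ => rfl
  phi_lip := by simp
  phi_exit := fun _ => rfl
  phi_gap := fun k j hjk => absurd (funext fun i => i.elim0) hjk

variable {f q : ℕ} (Γ : Gadget f q)

def Gadget.tl (i : Fin q) : ℕ := (q - i.val) * (Γ.D + 3)

abbrev Gadget.CV : Type := (Fin (q+1) ⊕ (Σ i : Fin q, Fin (Γ.tl i))) ⊕ (Fin q × Γ.V)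

instance : Finite Γ.CV := by
  haveI := Γ.finV
  unfold Gadget.CV
  infer_instance

def Gadget.spine (j : Fin (q+1)) : Γ.CV := Sum.inl (Sum.inl j)
def Gadget.tv (i : Fin q) (d : Fin (Γ.tl i)) : Γ.CV := Sum.inl (Sum.inr ⟨i, d⟩)
def Gadget.cop (i : Fin q) (v : Γ.V) : Γ.CV := Sum.inr (i, v)

def Gadget.R : Γ.CV → Γ.CV → Prop
  | Sum.inl (Sum.inl j), Sum.inl (Sum.inl j') => j'.val = j.val + 1
  | Sum.inl (Sum.inl j), Sum.inl (Sum.inr ⟨i, d⟩) => j.val = i.val ∧ d.val = 0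
  | Sum.inl (Sum.inr ⟨i,d⟩), Sum.inl (Sum.inr ⟨i',d'⟩) => i.val = i'.val ∧ d'.val = d.val + 1
  | Sum.inl (Sum.inr ⟨i,d⟩), Sum.inr (i', v) => i.val = i'.val ∧ d.val + 1 = Γ.tl i ∧ v = Γ.s
  | Sum.inr (i,u), Sum.inr (i',v) => i = i' ∧ Γ.G.Adj u v
  | _, _ => False

def Gadget.CG : SimpleGraph Γ.CV := SimpleGraph.fromRel Γ.R

def Gadget.csel (k : Fin (f+1) → Fin q) : Set (Sym2 Γ.CV) :=
  insert s(Γ.spine (k 0).castSucc, Γ.spine (k 0).succ)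
    (Sym2.map (Γ.cop (k 0)) '' Γ.sel (Fin.tail k))

def Gadget.cm (k : Fin (f+1) → Fin q) : ℕ :=
  (k 0).val + Γ.tl (k 0) + 1 + Γ.m (Fin.tail k)

def Gadget.cphi (k : Fin (f+1) → Fin q) : Γ.CV → ℕ
  | Sum.inl (Sum.inl j) => if j.val ≤ (k 0).val then j.val else Γ.cm k + 2
  | Sum.inl (Sum.inr ⟨j,d⟩) =>
      if j.val ≤ (k 0).val then j.val + d.val + 1 else Γ.cm k + 2
  | Sum.inr (j,v) =>
      if j.val < (k 0).val then j.val + Γ.tl j + 1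
      else if j = k 0 then
        min ((k 0).val + Γ.tl (k 0) + 1 + Γ.phi (Fin.tail k) v) (Γ.cm k + 2)
      else Γ.cm k + 2

lemma Gadget.adj_cop (i : Fin q) {u v : Γ.V} (h : Γ.G.Adj u v) :
    Γ.CG.Adj (Γ.cop i u) (Γ.cop i v) := by
  rw [Gadget.CG, fromRel_adj]
  refine ⟨fun he => h.ne ?_, Or.inl ⟨rfl, h⟩⟩
  simp only [Gadget.cop] at he
  injection he with he'
  injection he' with _ h2

lemma Gadget.mem_csel_cop_iff (k : Fin (f+1) → Fin q) (i : Fin q) (u v : Γ.V) :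
    s(Γ.cop i u, Γ.cop i v) ∈ Γ.csel k ↔ (i = k 0 ∧ s(u,v) ∈ Γ.sel (Fin.tail k)) := by
  unfold Gadget.csel
  rw [Set.mem_insert_iff]
  constructor
  · rintro (h | ⟨e, he, heq⟩)
    · rw [Sym2.eq_iff] at h
      rcases h with ⟨h1, -⟩ | ⟨h1, -⟩ <;> simp [Gadget.cop, Gadget.spine] at h1
    · induction e using Sym2.ind with
      | _ a b =>
        rw [Sym2.map_pair_eq, Sym2.eq_iff] at heq
        rcases heq with ⟨h1, h2⟩ | ⟨h1, h2⟩ <;>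
          simp only [Gadget.cop] at h1 h2
        · obtain ⟨hk, hu⟩ : k 0 = i ∧ a = u := by
            injection h1 with h'; injection h' with hk hu; exact ⟨hk, hu⟩
          obtain ⟨-, hv⟩ : k 0 = i ∧ b = v := by
            injection h2 with h'; injection h' with hk hv; exact ⟨hk, hv⟩
          exact ⟨hk.symm, by rw [show s(u,v) = s(a,b) by rw [hu, hv]]; exact he⟩
        · obtain ⟨hk, hu⟩ : k 0 = i ∧ a = v := by
            injection h1 with h'; injection h' with hk hu; exact ⟨hk, hu⟩
          obtain ⟨-, hv⟩ : k 0 = i ∧ b = u := by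
            injection h2 with h'; injection h' with hk hv; exact ⟨hk, hv⟩
          exact ⟨hk.symm, by rw [show s(u,v) = s(b,a) by rw [hu, hv], Sym2.eq_swap]; exact he⟩
  · rintro ⟨rfl, hsel⟩
    exact Or.inr ⟨s(u,v), hsel, by rw [Sym2.map_pair_eq]⟩

lemma Gadget.not_mem_csel_left_inl (k : Fin (f+1) → Fin q)
    (x : Fin (q+1) ⊕ (Σ i : Fin q, Fin (Γ.tl i))) (y : Γ.CV)
    (hne : s((Sum.inl x : Γ.CV), y) ≠ s(Γ.spine (k 0).castSucc, Γ.spine (k 0).succ)) :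
    s((Sum.inl x : Γ.CV), y) ∉ Γ.csel k := by
  intro h
  rcases Set.mem_insert_iff.mp h with h | ⟨e, he, heq⟩
  · exact hne h
  · induction e using Sym2.ind with
    | _ a b =>
      rw [Sym2.map_pair_eq, Sym2.eq_iff] at heq
      rcases heq with ⟨h1, -⟩ | ⟨-, h2⟩
      · simp [Gadget.cop] at h1
      · simp [Gadget.cop] at h2

instance sym2Finite {α : Type*} [Finite α] : Finite (Sym2 α) := by
  apply Finite.of_surjective (fun p : α × α => s(p.1, p.2))
  intro z
  induction z using Sym2.ind with
  | _ x y => exact ⟨(x, y), rfl⟩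

lemma Gadget.not_mem_csel_tv (k : Fin (f+1) → Fin q) (i : Fin q) (d : Fin (Γ.tl i))
    (y : Γ.CV) : s(Γ.tv i d, y) ∉ Γ.csel k := by
  intro hmem
  rcases Set.mem_insert_iff.mp hmem with h | ⟨e, he, heq⟩
  · rw [Sym2.eq_iff] at h
    rcases h with ⟨ha, -⟩ | ⟨ha, -⟩ <;> exact absurd ha (by simp [Gadget.tv, Gadget.spine])
  · induction e using Sym2.ind with
    | _ a b =>
      rw [Sym2.map_pair_eq, Sym2.eq_iff] at heq
      rcases heq with ⟨h1, -⟩ | ⟨-, h2⟩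
      · exact absurd h1 (by simp [Gadget.cop, Gadget.tv])
      · exact absurd h2 (by simp [Gadget.cop, Gadget.tv])

lemma Gadget.tv_inj_val {i : Fin q} {d d' : Fin (Γ.tl i)} (h : Γ.tv i d = Γ.tv i d') :
    d.val = d'.val := by
  have := congrArg (fun x : Γ.CV => match x with
    | Sum.inl (Sum.inr p) => p.2.val
    | _ => 0) h
  exact this

lemma Gadget.not_mem_csel_spine_spine (k : Fin (f+1) → Fin q) {a b : Fin (q+1)}
    (hab : b.val = a.val + 1) (h : a.val ≠ (k 0).val) :
    s(Γ.spine a, Γ.spine b) ∉ Γ.csel k := by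
  apply Γ.not_mem_csel_left_inl
  intro hEq
  rw [Sym2.eq_iff] at hEq
  rcases hEq with ⟨ha, hb⟩ | ⟨ha, hb⟩ <;>
    simp only [Gadget.spine, Sum.inl.injEq, Fin.ext_iff, Fin.coe_castSucc,
      Fin.val_succ] at ha hb <;> omega

lemma Gadget.not_mem_csel_spine_tv (k : Fin (f+1) → Fin q) (a : Fin (q+1)) (i : Fin q)
    (d : Fin (Γ.tl i)) : s(Γ.spine a, Γ.tv i d) ∉ Γ.csel k := by
  rw [Sym2.eq_swap]
  exact Γ.not_mem_csel_tv k i d _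

lemma Gadget.cphi_spine (k : Fin (f+1) → Fin q) (j : Fin (q+1)) :
    Γ.cphi k (Sum.inl (Sum.inl j)) = if j.val ≤ (k 0).val then j.val else Γ.cm k + 2 := rfl

lemma Gadget.cphi_tv (k : Fin (f+1) → Fin q) (j : Fin q) (d : Fin (Γ.tl j)) :
    Γ.cphi k (Sum.inl (Sum.inr ⟨j,d⟩)) =
      if j.val ≤ (k 0).val then j.val + d.val + 1 else Γ.cm k + 2 := rfl

lemma Gadget.cphi_cop (k : Fin (f+1) → Fin q) (j : Fin q) (v : Γ.V) :
    Γ.cphi k (Sum.inr (j,v)) =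
      if j.val < (k 0).val then j.val + Γ.tl j + 1
      else if j = k 0 then
        min ((k 0).val + Γ.tl (k 0) + 1 + Γ.phi (Fin.tail k) v) (Γ.cm k + 2)
      else Γ.cm k + 2 := rfl

lemma Gadget.cphi_lip_R (k : Fin (f+1) → Fin q) (u v : Γ.CV) (hR : Γ.R u v)
    (hmem : s(u,v) ∉ Γ.csel k) :
    Γ.cphi k v ≤ Γ.cphi k u + 1 ∧ Γ.cphi k u ≤ Γ.cphi k v + 1 := by
  rcases u with (j | ⟨i1,d1⟩) | ⟨i1,w1⟩ <;> rcases v with (j' | ⟨i2,d2⟩) | ⟨i2,w2⟩ <;>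
    try exact hR.elim
  -- spine-spine
  · have hj : j'.val = j.val + 1 := hR
    have hji : j.val ≠ (k 0).val := by
      intro he
      apply hmem
      apply Set.mem_insert_iff.mpr
      left
      have e1 : j = (k 0).castSucc := Fin.ext (by simpa using he)
      have e2 : j' = (k 0).succ := Fin.ext (by simp [hj, he])
      rw [e1, e2]; rfl
    rw [Γ.cphi_spine, Γ.cphi_spine]
    constructor <;> split_ifs <;> omega
  -- spine-tail
  · obtain ⟨h1, h2⟩ := hR
    rw [Γ.cphi_spine, Γ.cphi_tv]
    constructor <;> split_ifs <;> omega
  -- tail-tail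
  · obtain ⟨h1, h2⟩ := hR
    rw [Γ.cphi_tv, Γ.cphi_tv]
    constructor <;> split_ifs <;> omega
  -- tail-cop
  · obtain ⟨h1, h2, h3⟩ := hR
    subst h3
    have htl : Γ.tl i1 = Γ.tl i2 := by unfold Gadget.tl; rw [h1]
    have hm := Γ.m_le (Fin.tail k)
    have hcm : Γ.cm k = (k 0).val + Γ.tl (k 0) + 1 + Γ.m (Fin.tail k) := rfl
    rw [Γ.cphi_tv, Γ.cphi_cop, Γ.phi_s]
    by_cases hc : i2 = k 0
    · subst hc
      rw [if_neg (lt_irrefl _), if_pos rfl]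
      constructor <;> split_ifs <;> omega
    · have hc' : i2.val ≠ (k 0).val := fun he => hc (Fin.ext he)
      rw [if_neg hc]
      constructor <;> split_ifs <;> omega
  -- cop-cop
  · obtain ⟨h1, h2⟩ := hR
    subst h1
    by_cases hc : i1 = k 0
    · subst hc
      have hmem' : s(w1,w2) ∉ Γ.sel (Fin.tail k) := fun hs =>
        hmem ((Γ.mem_csel_cop_iff k _ w1 w2).mpr ⟨rfl, hs⟩)
      have l1 := Γ.phi_lip (Fin.tail k) w1 w2 h2 hmem'
      have l2 := Γ.phi_lip (Fin.tail k) w2 w1 h2.symm (by rwa [Sym2.eq_swap])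
      rw [Γ.cphi_cop, Γ.cphi_cop, if_neg (lt_irrefl _), if_neg (lt_irrefl _),
        if_pos rfl, if_pos rfl]
      omega
    · rw [Γ.cphi_cop, Γ.cphi_cop]
      split_ifs with hd he <;> first | omega | exact absurd he hc

lemma Gadget.cphi_lip (k : Fin (f+1) → Fin q) (u v : Γ.CV) (hadj : Γ.CG.Adj u v)
    (hmem : s(u,v) ∉ Γ.csel k) : Γ.cphi k v ≤ Γ.cphi k u + 1 := by
  rw [Gadget.CG, fromRel_adj] at hadj
  rcases hadj.2 with h | h
  · exact (Γ.cphi_lip_R k u v h hmem).1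
  · exact (Γ.cphi_lip_R k v u h (by rwa [Sym2.eq_swap] at hmem)).2

def Gadget.copHom (k : Fin (f+1) → Fin q) :
    (Γ.G.deleteEdges (Γ.sel (Fin.tail k))) →g (Γ.CG.deleteEdges (Γ.csel k)) where
  toFun := Γ.cop (k 0)
  map_rel' := by
    intro u v h
    rw [deleteEdges_adj] at h ⊢
    refine ⟨Γ.adj_cop _ h.1, ?_⟩
    rw [Γ.mem_csel_cop_iff]
    rintro ⟨-, hs⟩
    exact h.2 hs

lemma Gadget.exists_entry_walk (k : Fin (f+1) → Fin q) :
    ∃ p : (Γ.CG.deleteEdges (Γ.csel k)).Walk (Γ.spine 0) (Γ.cop (k 0) Γ.s),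
      p.length = (k 0).val + Γ.tl (k 0) + 1 := by
  have hiq : (k 0).val < q := (k 0).isLt
  have htl3 : 3 ≤ Γ.tl (k 0) := by
    have h1 : 1 ≤ q - (k 0).val := by omega
    have := Nat.mul_le_mul_right (Γ.D + 3) h1
    unfold Gadget.tl
    omega
  let g : ℕ → Γ.CV := fun n =>
    if h1 : n ≤ (k 0).val then Γ.spine ⟨n, by omega⟩
    else if h2 : n - ((k 0).val + 1) < Γ.tl (k 0) then Γ.tv (k 0) ⟨n - ((k 0).val + 1), h2⟩
    else Γ.cop (k 0) Γ.s
  have hg0 : g 0 = Γ.spine 0 := by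
    simp only [g, dif_pos (Nat.zero_le _)]
    rfl
  have hgE : g ((k 0).val + Γ.tl (k 0) + 1) = Γ.cop (k 0) Γ.s := by
    simp only [g]
    rw [dif_neg (by omega), dif_neg (by omega)]
  have hadj : ∀ j, j < (k 0).val + Γ.tl (k 0) + 1 →
      (Γ.CG.deleteEdges (Γ.csel k)).Adj (g j) (g (j+1)) := by
    intro j hj
    rw [deleteEdges_adj]
    rcases Nat.lt_or_ge j (k 0).val with hc1 | hc1
    · -- spine-spine edge
      have e1 : g j = Γ.spine ⟨j, by omega⟩ := by simp only [g]; rw [dif_pos (by omega)]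
      have e2 : g (j+1) = Γ.spine ⟨j+1, by omega⟩ := by simp only [g]; rw [dif_pos (by omega)]
      rw [e1, e2]
      refine ⟨?_, Γ.not_mem_csel_spine_spine k rfl (by simpa using hc1.ne)⟩
      rw [Gadget.CG, fromRel_adj]
      refine ⟨?_, Or.inl rfl⟩
      intro hh
      simp only [Gadget.spine, Sum.inl.injEq, Fin.mk.injEq] at hh
      omega
    · rcases Nat.lt_or_ge j ((k 0).val + Γ.tl (k 0)) with hc2 | hc2
      · rcases Nat.eq_or_lt_of_le hc1 with hc3 | hc3
        · -- spine-tail edge (j = k 0)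
          have e1 : g j = Γ.spine ⟨j, by omega⟩ := by simp only [g]; rw [dif_pos (by omega)]
          have e2 : g (j+1) = Γ.tv (k 0) ⟨j - (k 0).val, by omega⟩ := by
            simp only [g]
            rw [dif_neg (by omega), dif_pos (by omega)]
            congr 1
            exact Fin.ext (by simp)
          rw [e1, e2]
          refine ⟨?_, Γ.not_mem_csel_spine_tv k _ _ _⟩
          rw [Gadget.CG, fromRel_adj]
          refine ⟨by simp [Gadget.spine, Gadget.tv], Or.inl ⟨?_, ?_⟩⟩
          · show j = (k 0).val
            omega
          · show j - (k 0).val = 0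
            omega
        · -- tail-tail edge
          have e1 : g j = Γ.tv (k 0) ⟨j - ((k 0).val + 1), by omega⟩ := by
            simp only [g]; rw [dif_neg (by omega), dif_pos (by omega)]
          have e2 : g (j+1) = Γ.tv (k 0) ⟨j - (k 0).val, by omega⟩ := by
            simp only [g]
            rw [dif_neg (by omega), dif_pos (by omega)]
            congr 1
            exact Fin.ext (by simp)
          rw [e1, e2]
          refine ⟨?_, Γ.not_mem_csel_tv k _ _ _⟩
          rw [Gadget.CG, fromRel_adj]
          refine ⟨?_, Or.inl ⟨rfl, ?_⟩⟩
          · intro hh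
            have := Γ.tv_inj_val hh
            simp only [] at this
            omega
          · show j - (k 0).val = j - ((k 0).val + 1) + 1
            omega
      · -- tail-cop edge: j = k0 + tl k0
        have hc3 : j = (k 0).val + Γ.tl (k 0) := by omega
        have e1 : g j = Γ.tv (k 0) ⟨j - ((k 0).val + 1), by omega⟩ := by
          simp only [g]; rw [dif_neg (by omega), dif_pos (by omega)]
        have e2 : g (j+1) = Γ.cop (k 0) Γ.s := by
          simp only [g]
          rw [dif_neg (by omega), dif_neg (by omega)]
        rw [e1, e2]
        refine ⟨?_, Γ.not_mem_csel_tv k _ _ _⟩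
        rw [Gadget.CG, fromRel_adj]
        refine ⟨by simp [Gadget.tv, Gadget.cop], Or.inl ⟨rfl, ?_, rfl⟩⟩
        show j - ((k 0).val + 1) + 1 = Γ.tl (k 0)
        omega
  obtain ⟨p, hp⟩ := exists_chain_walk g ((k 0).val + Γ.tl (k 0) + 1) hadj
  exact ⟨p.copy hg0 hgE, by simpa using hp⟩

def compose : Gadget (f+1) q where
  V := Γ.CV
  finV := inferInstance
  G := Γ.CG
  s := Γ.spine 0
  exit := fun k => Γ.cop (k 0) (Γ.exit (Fin.tail k))
  exit_inj := by
    intro k1 k2 h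
    simp only [Gadget.cop] at h
    injection h with h'
    injection h' with ha hb
    have h2 := Γ.exit_inj hb
    rw [← Fin.cons_self_tail k1, ← Fin.cons_self_tail k2, ha, h2]
  sel := Γ.csel
  sel_sub := by
    intro k e he
    rcases Set.mem_insert_iff.mp he with h | ⟨e', he', heq⟩
    · subst h
      rw [mem_edgeSet, Gadget.CG, fromRel_adj]
      refine ⟨?_, Or.inl ?_⟩
      · intro hh
        simp only [Gadget.spine, Sum.inl.injEq] at hh
        have := congrArg Fin.val hh
        simp at this
      · show ((k 0).succ).val = ((k 0).castSucc).val + 1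
        simp
    · induction e' using Sym2.ind with
      | _ a b =>
        subst heq
        rw [Sym2.map_pair_eq, mem_edgeSet]
        exact Γ.adj_cop _ (Γ.sel_sub (Fin.tail k) he')
  sel_card := by
    intro k
    haveI := Γ.finV
    calc (Γ.csel k).ncard ≤ (Sym2.map (Γ.cop (k 0)) '' Γ.sel (Fin.tail k)).ncard + 1 :=
          Set.ncard_insert_le _ _
    _ ≤ (Γ.sel (Fin.tail k)).ncard + 1 := by
        have := Set.ncard_image_le (f := Sym2.map (Γ.cop (k 0)))
          (s := Γ.sel (Fin.tail k)) (Set.toFinite _)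
        omega
    _ ≤ f + 1 := by have := Γ.sel_card (Fin.tail k); omega
  m := Γ.cm
  D := q + q * (Γ.D + 3) + Γ.D
  m_le := by
    intro k
    have h1 : Γ.tl (k 0) ≤ q * (Γ.D + 3) := Nat.mul_le_mul_right _ (Nat.sub_le _ _)
    have h2 := Γ.m_le (Fin.tail k)
    have h3 : (k 0).val < q := (k 0).isLt
    unfold Gadget.cm
    omega
  mwalk := by
    intro k
    obtain ⟨p1, hp1⟩ := Γ.exists_entry_walk k
    obtain ⟨p0, hp0⟩ := Γ.mwalk (Fin.tail k)
    refine ⟨p1.append (p0.map (Γ.copHom k)), ?_⟩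
    calc (p1.append (p0.map (Γ.copHom k))).length
        = p1.length + (p0.map (Γ.copHom k)).length := Walk.length_append _ _
    _ = p1.length + p0.length := by rw [Walk.length_map]
    _ = Γ.cm k := by rw [hp1, hp0]; rfl
  phi := Γ.cphi
  phi_s := by
    intro k
    show Γ.cphi k (Sum.inl (Sum.inl 0)) = 0
    rw [Γ.cphi_spine k 0, if_pos (by simp)]
    simp
  phi_lip := Γ.cphi_lip
  phi_exit := by
    intro k
    show Γ.cphi k (Sum.inr (k 0, Γ.exit (Fin.tail k))) = Γ.cm k
    rw [Γ.cphi_cop, if_neg (lt_irrefl _), if_pos rfl, Γ.phi_exit]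
    have : Γ.cm k = (k 0).val + Γ.tl (k 0) + 1 + Γ.m (Fin.tail k) := rfl
    omega
  phi_gap := by
    intro k j hjk
    show Γ.cm k + 2 ≤ Γ.cphi k (Sum.inr (j 0, Γ.exit (Fin.tail j)))
    rw [Γ.cphi_cop]
    have hcm : Γ.cm k = (k 0).val + Γ.tl (k 0) + 1 + Γ.m (Fin.tail k) := rfl
    have hm := Γ.m_le (Fin.tail k)
    by_cases hc : j 0 = k 0
    · rw [if_neg (by rw [hc]; exact lt_irrefl _), if_pos hc]
      have hne : Fin.tail j ≠ Fin.tail k := by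
        intro he
        apply hjk
        rw [← Fin.cons_self_tail j, ← Fin.cons_self_tail k, hc, he]
      have hgap := Γ.phi_gap (Fin.tail k) (Fin.tail j) hne
      have hv : (j 0).val = (k 0).val := by rw [hc]
      omega
    · split_ifs with h1
      · -- j 0 < k 0
        have hq : (k 0).val < q := (k 0).isLt
        have e1 : Γ.tl (j 0) = (q - (k 0).val) * (Γ.D + 3) + ((k 0).val - (j 0).val) * (Γ.D + 3) := by
          unfold Gadget.tl
          rw [← Nat.add_mul]
          congr 1
          omega
        have h1' : 1 ≤ (k 0).val - (j 0).val := by omega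
        have m1 : Γ.D + 2 ≤ ((k 0).val - (j 0).val) * (Γ.D + 2) := by
          simpa using Nat.mul_le_mul_right (Γ.D + 2) h1'
        have m2 : ((k 0).val - (j 0).val) * (Γ.D + 3)
            = ((k 0).val - (j 0).val) * (Γ.D + 2) + ((k 0).val - (j 0).val) := by ring
        have e3 : Γ.tl (k 0) = (q - (k 0).val) * (Γ.D + 3) := rfl
        omega
      · omega

lemma gadget_exists (f : ℕ) : ∃ A B : ℕ, 1 ≤ B ∧ ∀ q : ℕ, 1 ≤ q →
    ∃ Γ : Gadget f q, Γ.D ≤ A * q ^ f ∧ Nat.card Γ.V ≤ B * q ^ (f+1) ∧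
      (1 ≤ f → q ≤ Nat.card Γ.V) := by
  induction f with
  | zero =>
    refine ⟨0, 1, le_refl 1, fun q hq =>
      ⟨baseGadget q, by simp [baseGadget], ?_, fun h => absurd h (by omega)⟩⟩
    show Nat.card PUnit ≤ 1 * q ^ (0+1)
    rw [Nat.card_unique]
    simpa using hq
  | succ f ih =>
    obtain ⟨A, B, hB, h⟩ := ih
    refine ⟨2*A+4, A+B+5, by omega, fun q hq => ?_⟩
    obtain ⟨Γ, hD, hcard, -⟩ := h q hq
    haveI := Γ.finV
    have hqcard : q ≤ Nat.card Γ.CV := by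
      have hinj : Function.Injective (fun j : Fin (q+1) => (Sum.inl (Sum.inl j) : Γ.CV)) := by
        intro a b hab
        injection hab with h'
        injection h'
      have h2 : q + 1 ≤ Nat.card Γ.CV := by
        calc q + 1 = Nat.card (Fin (q+1)) := by simp
        _ ≤ Nat.card Γ.CV := Nat.card_le_card_of_injective _ hinj
      omega
    refine ⟨compose Γ, ?_, ?_, fun _ => hqcard⟩
    · show q + q * (Γ.D + 3) + Γ.D ≤ (2*A+4) * q ^ (f+1)
      have p1 : q ≤ q ^ (f+1) := by
        calc q = q ^ 1 := (pow_one q).symm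
        _ ≤ q ^ (f+1) := Nat.pow_le_pow_right hq (by omega)
      have p2 : q * (Γ.D + 3) ≤ A * q ^ (f+1) + 3 * q ^ (f+1) := by
        calc q * (Γ.D + 3) ≤ q * (A * q ^ f + 3) := by gcongr
        _ = A * (q ^ f * q) + 3 * q := by ring
        _ ≤ A * q ^ (f+1) + 3 * q ^ (f+1) := by
            have e1 : q ^ f * q = q ^ (f+1) := (pow_succ q f).symm
            have e2 : q ≤ q ^ (f+1) := by
              calc q = q ^ 1 := (pow_one q).symm
              _ ≤ q ^ (f+1) := Nat.pow_le_pow_right hq (by omega)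
            rw [e1]
            gcongr
      have p3 : Γ.D ≤ A * q ^ (f+1) :=
        le_trans hD (Nat.mul_le_mul_left A (Nat.pow_le_pow_right hq (by omega)))
      have expand : (2*A+4) * q ^ (f+1) = A * q ^ (f+1) + A * q ^ (f+1) + 4 * q ^ (f+1) := by
        ring
      omega
    · show Nat.card Γ.CV ≤ (A+B+5) * q ^ (f+2)
      have hsig : Nat.card (Σ i : Fin q, Fin (Γ.tl i)) ≤ q * (q * (Γ.D + 3)) := by
        have hinj : Function.Injective
            (fun p : Σ i : Fin q, Fin (Γ.tl i) =>
              ((p.1, ⟨p.2.val, by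
                have h1 : Γ.tl p.1 ≤ q * (Γ.D+3) :=
                  Nat.mul_le_mul_right _ (Nat.sub_le _ _)
                have := p.2.isLt
                omega⟩) : Fin q × Fin (q * (Γ.D + 3)))) := by
          rintro ⟨i, d⟩ ⟨i', d'⟩ hp
          simp only [Prod.mk.injEq, Fin.mk.injEq] at hp
          obtain ⟨h1, h2⟩ := hp
          subst h1
          simp only [Sigma.mk.inj_iff, heq_eq_eq, true_and]
          exact Fin.ext h2
        calc Nat.card (Σ i : Fin q, Fin (Γ.tl i))
            ≤ Nat.card (Fin q × Fin (q * (Γ.D + 3))) := Nat.card_le_card_of_injective _ hinj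
        _ = q * (q * (Γ.D + 3)) := by simp [Nat.card_eq_fintype_card]
      have hCV : Nat.card Γ.CV =
          (q + 1) + Nat.card (Σ i : Fin q, Fin (Γ.tl i)) + q * Nat.card Γ.V := by
        show Nat.card ((Fin (q+1) ⊕ (Σ i : Fin q, Fin (Γ.tl i))) ⊕ (Fin q × Γ.V)) = _
        rw [Nat.card_sum, Nat.card_sum, Nat.card_prod]
        simp
      have p0 : 1 ≤ q ^ (f+2) := Nat.one_le_pow _ _ hq
      have p1 : q + 1 ≤ 2 * q ^ (f+2) := by
        have : q ≤ q ^ (f+2) := by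
          calc q = q ^ 1 := (pow_one q).symm
          _ ≤ q ^ (f+2) := Nat.pow_le_pow_right hq (by omega)
        omega
      have p2 : q * (q * (Γ.D + 3)) ≤ A * q ^ (f+2) + 3 * q ^ (f+2) := by
        calc q * (q * (Γ.D + 3)) ≤ q * (q * (A * q ^ f + 3)) := by gcongr
        _ = A * (q ^ f * q * q) + 3 * (q * q) := by ring
        _ ≤ A * q ^ (f+2) + 3 * q ^ (f+2) := by
            have e1 : q ^ f * q * q = q ^ (f+2) := by ring
            have e2 : q * q ≤ q ^ (f+2) := by
              calc q * q = q ^ 2 := by ring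
              _ ≤ q ^ (f+2) := Nat.pow_le_pow_right hq (by omega)
            rw [e1]
            gcongr
      have p3 : q * Nat.card Γ.V ≤ B * q ^ (f+2) := by
        calc q * Nat.card Γ.V ≤ q * (B * q ^ (f+1)) := by gcongr
        _ = B * (q ^ (f+1) * q) := by ring
        _ = B * q ^ (f+2) := by rw [← pow_succ]
      have expand : (A+B+5) * q ^ (f+2)
          = A * q ^ (f+2) + B * q ^ (f+2) + 5 * q ^ (f+2) := by ring
      omega
    -- the refine above now needs a third component


/-! ## Final assembly -/

section Assembly

variable (σ mT : ℕ)

abbrev Gadget.W : Type := (Fin σ × Γ.V) ⊕ Fin mT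

def Gadget.WR : Γ.W σ mT → Γ.W σ mT → Prop
  | Sum.inl (c,u), Sum.inl (c',v) => c = c' ∧ Γ.G.Adj u v
  | Sum.inl (_,u), Sum.inr _ => ∃ k, u = Γ.exit k
  | Sum.inr _, _ => False

def Gadget.WG : SimpleGraph (Γ.W σ mT) := SimpleGraph.fromRel (Γ.WR σ mT)

def Gadget.WF (c : Fin σ) (k : Fin f → Fin q) : Set (Sym2 (Γ.W σ mT)) :=
  Sym2.map (fun v => Sum.inl (c, v)) '' Γ.sel k

def Gadget.Wphi (c : Fin σ) (k : Fin f → Fin q) : Γ.W σ mT → ℕ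
  | Sum.inl (c', v) => if c' = c then min (Γ.phi k v) (Γ.m k + 2) else Γ.m k + 2
  | Sum.inr _ => Γ.m k + 1

variable {σ mT}

lemma Gadget.Wphi_inl (c₀ : Fin σ) (k : Fin f → Fin q) (c : Fin σ) (v : Γ.V) :
    Γ.Wphi σ mT c₀ k (Sum.inl (c,v)) =
      if c = c₀ then min (Γ.phi k v) (Γ.m k + 2) else Γ.m k + 2 := rfl

lemma Gadget.Wphi_inr (c₀ : Fin σ) (k : Fin f → Fin q) (t : Fin mT) :
    Γ.Wphi σ mT c₀ k (Sum.inr t) = Γ.m k + 1 := rfl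

lemma Gadget.mem_WF_iff (c₀ : Fin σ) (k : Fin f → Fin q) (c : Fin σ) (u v : Γ.V) :
    s((Sum.inl (c,u) : Γ.W σ mT), Sum.inl (c,v)) ∈ Γ.WF σ mT c₀ k ↔
      (c = c₀ ∧ s(u,v) ∈ Γ.sel k) := by
  unfold Gadget.WF
  constructor
  · rintro ⟨e, he, heq⟩
    induction e using Sym2.ind with
    | _ a b =>
      rw [Sym2.map_pair_eq, Sym2.eq_iff] at heq
      rcases heq with ⟨h1, h2⟩ | ⟨h1, h2⟩
      · obtain ⟨hc, hu⟩ : c₀ = c ∧ a = u := by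
          injection h1 with h'; injection h' with hc hu; exact ⟨hc, hu⟩
        obtain ⟨-, hv⟩ : c₀ = c ∧ b = v := by
          injection h2 with h'; injection h' with hc hv; exact ⟨hc, hv⟩
        exact ⟨hc.symm, by rw [show s(u,v) = s(a,b) by rw [hu, hv]]; exact he⟩
      · obtain ⟨hc, hu⟩ : c₀ = c ∧ a = v := by
          injection h1 with h'; injection h' with hc hu; exact ⟨hc, hu⟩
        obtain ⟨-, hv⟩ : c₀ = c ∧ b = u := by
          injection h2 with h'; injection h' with hc hv; exact ⟨hc, hv⟩
        exact ⟨hc.symm, by rw [show s(u,v) = s(b,a) by rw [hu, hv], Sym2.eq_swap]; exact he⟩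
  · rintro ⟨rfl, hsel⟩
    exact ⟨s(u,v), hsel, by rw [Sym2.map_pair_eq]⟩

lemma Gadget.not_mem_WF_of_inr (c₀ : Fin σ) (k : Fin f → Fin q) (t : Fin mT)
    (y : Γ.W σ mT) : s((Sum.inr t : Γ.W σ mT), y) ∉ Γ.WF σ mT c₀ k := by
  rintro ⟨e, he, heq⟩
  induction e using Sym2.ind with
  | _ a b =>
    rw [Sym2.map_pair_eq, Sym2.eq_iff] at heq
    rcases heq with ⟨h1, -⟩ | ⟨-, h2⟩
    · exact absurd h1 (by simp)
    · exact absurd h2 (by simp)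

lemma Gadget.WF_sub (c : Fin σ) (k : Fin f → Fin q) :
    Γ.WF σ mT c k ⊆ (Γ.WG σ mT).edgeSet := by
  rintro e ⟨e', he', heq⟩
  induction e' using Sym2.ind with
  | _ a b =>
    subst heq
    rw [Sym2.map_pair_eq, mem_edgeSet, Gadget.WG, fromRel_adj]
    have hadj := Γ.sel_sub k he'
    rw [mem_edgeSet] at hadj
    refine ⟨?_, Or.inl ⟨rfl, hadj⟩⟩
    intro hh
    injection hh with h'
    injection h' with _ h2
    exact hadj.ne h2

lemma Gadget.WF_card (c : Fin σ) (k : Fin f → Fin q) : (Γ.WF σ mT c k).ncard ≤ f := by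
  haveI := Γ.finV
  calc (Γ.WF σ mT c k).ncard ≤ (Γ.sel k).ncard := Set.ncard_image_le (Set.toFinite _)
  _ ≤ f := Γ.sel_card k

lemma Gadget.Wphi_lip_R (c₀ : Fin σ) (k : Fin f → Fin q) (u v : Γ.W σ mT)
    (hR : Γ.WR σ mT u v) (hmem : s(u,v) ∉ Γ.WF σ mT c₀ k) :
    Γ.Wphi σ mT c₀ k v ≤ Γ.Wphi σ mT c₀ k u + 1 ∧
      Γ.Wphi σ mT c₀ k u ≤ Γ.Wphi σ mT c₀ k v + 1 := by
  rcases u with ⟨c,u⟩ | t <;> rcases v with ⟨c',v⟩ | t' <;> try exact hR.elim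
  · -- copy edge
    obtain ⟨rfl, hadj⟩ := hR
    rw [Γ.Wphi_inl, Γ.Wphi_inl]
    by_cases hc : c = c₀
    · subst hc
      have hmem' : s(u,v) ∉ Γ.sel k := fun hs =>
        hmem ((Γ.mem_WF_iff c k c u v).mpr ⟨rfl, hs⟩)
      have l1 := Γ.phi_lip k u v hadj hmem'
      have l2 := Γ.phi_lip k v u hadj.symm (by rwa [Sym2.eq_swap])
      rw [if_pos rfl, if_pos rfl]
      omega
    · rw [if_neg hc, if_neg hc]
      omega
  · -- exit-to-T edge
    obtain ⟨j, rfl⟩ := hR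
    rw [Γ.Wphi_inl, Γ.Wphi_inr]
    by_cases hc : c = c₀
    · rw [if_pos hc]
      by_cases hj : j = k
      · subst hj
        rw [Γ.phi_exit]
        omega
      · have := Γ.phi_gap k j hj
        omega
    · rw [if_neg hc]
      omega

lemma Gadget.Wphi_lip (c₀ : Fin σ) (k : Fin f → Fin q) (u v : Γ.W σ mT)
    (hadj : ((Γ.WG σ mT).deleteEdges (Γ.WF σ mT c₀ k)).Adj u v) :
    Γ.Wphi σ mT c₀ k v ≤ Γ.Wphi σ mT c₀ k u + 1 := by
  rw [deleteEdges_adj] at hadj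
  obtain ⟨hadj', hmem⟩ := hadj
  rw [Gadget.WG, fromRel_adj] at hadj'
  rcases hadj'.2 with h | h
  · exact (Γ.Wphi_lip_R c₀ k u v h hmem).1
  · exact (Γ.Wphi_lip_R c₀ k v u h (by rwa [Sym2.eq_swap] at hmem)).2

def Gadget.copyHom (c : Fin σ) (k : Fin f → Fin q) :
    (Γ.G.deleteEdges (Γ.sel k)) →g ((Γ.WG σ mT).deleteEdges (Γ.WF σ mT c k)) where
  toFun := fun v => Sum.inl (c, v)
  map_rel' := by
    intro u v h
    rw [deleteEdges_adj] at h ⊢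
    refine ⟨?_, ?_⟩
    · rw [Gadget.WG, fromRel_adj]
      refine ⟨?_, Or.inl ⟨rfl, h.1⟩⟩
      intro hh
      injection hh with h'
      injection h' with _ h2
      exact h.1.ne h2
    · rw [Γ.mem_WF_iff]
      rintro ⟨-, hs⟩
      exact h.2 hs

lemma Gadget.Wdist (c : Fin σ) (k : Fin f → Fin q) (t : Fin mT) :
    ((Γ.WG σ mT).deleteEdges (Γ.WF σ mT c k)).Reachable
        (Sum.inl (c, Γ.s)) (Sum.inr t) ∧
    ((Γ.WG σ mT).deleteEdges (Γ.WF σ mT c k)).dist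
        (Sum.inl (c, Γ.s)) (Sum.inr t) = Γ.m k + 1 := by
  obtain ⟨p0, hp0⟩ := Γ.mwalk k
  have hlast : ((Γ.WG σ mT).deleteEdges (Γ.WF σ mT c k)).Adj
      (Sum.inl (c, Γ.exit k)) (Sum.inr t) := by
    rw [deleteEdges_adj]
    constructor
    · rw [Gadget.WG, fromRel_adj]
      exact ⟨by simp, Or.inl ⟨k, rfl⟩⟩
    · rw [Sym2.eq_swap]
      exact Γ.not_mem_WF_of_inr c k t _
  have hpwlen : ((p0.map (Γ.copyHom c k)).concat hlast).length = Γ.m k + 1 := by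
    calc ((p0.map (Γ.copyHom c k)).concat hlast).length
        = (p0.map (Γ.copyHom c k)).length + 1 := Walk.length_concat _ _
    _ = Γ.m k + 1 := by rw [Walk.length_map, hp0]
  have hreach : ((Γ.WG σ mT).deleteEdges (Γ.WF σ mT c k)).Reachable
      (Sum.inl (c, Γ.s)) (Sum.inr t) := ⟨(p0.map (Γ.copyHom c k)).concat hlast⟩
  refine ⟨hreach, le_antisymm ?_ ?_⟩
  · calc ((Γ.WG σ mT).deleteEdges (Γ.WF σ mT c k)).dist _ _
        ≤ ((p0.map (Γ.copyHom c k)).concat hlast).length :=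
          dist_le ((p0.map (Γ.copyHom c k)).concat hlast)
    _ = Γ.m k + 1 := hpwlen
  · obtain ⟨p, hp⟩ := hreach.exists_walk_length_eq_dist
    have hphi := phi_le_of_walk (Γ.Wphi σ mT c k) (Γ.Wphi_lip c k) p
    have h0 : Γ.Wphi σ mT c k (Sum.inl (c, Γ.s)) = 0 := by
      rw [Γ.Wphi_inl, if_pos rfl, Γ.phi_s]
      simp
    have ht : Γ.Wphi σ mT c k (Sum.inr t) = Γ.m k + 1 := rfl
    rw [h0, ht, hp] at hphi
    omega

lemma Gadget.forcing (c : Fin σ) (k : Fin f → Fin q) (t : Fin mT)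
    (H : SimpleGraph (Γ.W σ mT)) (hHle : H ≤ Γ.WG σ mT)
    (hreach : (H.deleteEdges (Γ.WF σ mT c k)).Reachable (Sum.inl (c, Γ.s)) (Sum.inr t))
    (hdist : (H.deleteEdges (Γ.WF σ mT c k)).dist (Sum.inl (c, Γ.s)) (Sum.inr t)
      = Γ.m k + 1) :
    s((Sum.inl (c, Γ.exit k) : Γ.W σ mT), Sum.inr t) ∈ H.edgeSet := by
  have hle : H.deleteEdges (Γ.WF σ mT c k) ≤ (Γ.WG σ mT).deleteEdges (Γ.WF σ mT c k) := by
    intro a b hab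
    rw [deleteEdges_adj] at hab ⊢
    exact ⟨hHle hab.1, hab.2⟩
  obtain ⟨p, hp⟩ := hreach.exists_walk_length_eq_dist
  rw [hdist] at hp
  have hpr : p.reverse.length = Γ.m k + 1 := by rw [Walk.length_reverse, hp]
  revert hpr
  cases hrev : p.reverse with
  | cons h q' =>
    intro hpr
    rename_i y
    rcases y with ⟨c', u⟩ | t'
    · -- y = inl (c', u)
      have hadjW : (Γ.WG σ mT).Adj (Sum.inr t) (Sum.inl (c', u)) := hHle (deleteEdges_adj .. |>.mp h).1
      have hR : Γ.WR σ mT (Sum.inl (c', u)) (Sum.inr t) := by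
        rw [Gadget.WG, fromRel_adj] at hadjW
        rcases hadjW.2 with hW | hW
        · exact hW.elim
        · exact hW
      obtain ⟨j, rfl⟩ := hR
      have hq'len : q'.length = Γ.m k := by
        rw [Walk.length_cons] at hpr
        omega
      have hphi := phi_le_of_walk (Γ.Wphi σ mT c k) (Γ.Wphi_lip c k)
        ((q'.reverse).mapLe hle)
      have h0 : Γ.Wphi σ mT c k (Sum.inl (c, Γ.s)) = 0 := by
        rw [Γ.Wphi_inl, if_pos rfl, Γ.phi_s]
        simp
      have hlen : ((q'.reverse).mapLe hle).length = q'.length := by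
        simp [Walk.mapLe]
      rw [hlen, hq'len, h0] at hphi
      have hck : c' = c ∧ j = k := by
        by_contra hcon
        have hval : Γ.Wphi σ mT c k (Sum.inl (c', Γ.exit j)) = Γ.m k + 2 := by
          rw [Γ.Wphi_inl]
          by_cases hc : c' = c
          · have hj : j ≠ k := fun hj => hcon ⟨hc, hj⟩
            have := Γ.phi_gap k j hj
            rw [if_pos hc]
            omega
          · rw [if_neg hc]
        rw [hval] at hphi
        omega
      obtain ⟨rfl, rfl⟩ := hck
      have : H.Adj (Sum.inr t) (Sum.inl (c', Γ.exit j)) :=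
        (H.deleteEdges_le _) h
      rw [mem_edgeSet]
      exact this.symm
    · -- y = inr t' : impossible
      exfalso
      have hadjW : (Γ.WG σ mT).Adj (Sum.inr t) (Sum.inr t') := hHle (deleteEdges_adj .. |>.mp h).1
      rw [Gadget.WG, fromRel_adj] at hadjW
      rcases hadjW.2 with hW | hW <;> exact hW

lemma Gadget.count (H : SimpleGraph (Γ.W σ mT))
    (hforce : ∀ (c : Fin σ) (k : Fin f → Fin q) (t : Fin mT),
      s((Sum.inl (c, Γ.exit k) : Γ.W σ mT), Sum.inr t) ∈ H.edgeSet) :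
    σ * q ^ f * mT ≤ H.edgeSet.ncard := by
  haveI := Γ.finV
  have hinj : Function.Injective
      (fun x : Fin σ × (Fin f → Fin q) × Fin mT =>
        s((Sum.inl (x.1, Γ.exit x.2.1) : Γ.W σ mT), Sum.inr x.2.2)) := by
    rintro ⟨c1, k1, t1⟩ ⟨c2, k2, t2⟩ h
    simp only at h
    rw [Sym2.eq_iff] at h
    rcases h with ⟨h1, h2⟩ | ⟨h1, -⟩
    · obtain ⟨hc, hk⟩ : c1 = c2 ∧ Γ.exit k1 = Γ.exit k2 := by
        injection h1 with h'
        injection h' with hc hk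
        exact ⟨hc, hk⟩
      have ht : t1 = t2 := by injection h2
      have hk2 := Γ.exit_inj hk
      simp [hc, hk2, ht]
    · exact absurd h1 (by simp)
  have hsub : Set.range
      (fun x : Fin σ × (Fin f → Fin q) × Fin mT =>
        s((Sum.inl (x.1, Γ.exit x.2.1) : Γ.W σ mT), Sum.inr x.2.2)) ⊆ H.edgeSet := by
    rintro e ⟨x, rfl⟩
    exact hforce x.1 x.2.1 x.2.2
  calc σ * q ^ f * mT = Nat.card (Fin σ × (Fin f → Fin q) × Fin mT) := by
        rw [Nat.card_prod, Nat.card_prod]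
        rw [Nat.card_eq_fintype_card (α := Fin f → Fin q), Fintype.card_fun]
        simp [mul_assoc]
  _ = (Set.range (fun x : Fin σ × (Fin f → Fin q) × Fin mT =>
        s((Sum.inl (x.1, Γ.exit x.2.1) : Γ.W σ mT), Sum.inr x.2.2))).ncard := by
        rw [← Set.image_univ, Set.ncard_image_of_injective _ hinj, Set.ncard_univ]
  _ ≤ H.edgeSet.ncard := Set.ncard_le_ncard hsub (Set.toFinite _)

end Assembly

/-- `H` is an `f`-FT `S × T` distance preserver of `G`. (local copy) -/
def IsFTPreserver' {V : Type*} (G H : SimpleGraph V) (S T : Set V) (f : ℕ) : Prop :=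
  H ≤ G ∧ ∀ F : Set (Sym2 V), F ⊆ G.edgeSet → F.ncard ≤ f → ∀ s ∈ S, ∀ t ∈ T,
    ((H.deleteEdges F).Reachable s t ↔ (G.deleteEdges F).Reachable s t) ∧
    ((G.deleteEdges F).Reachable s t →
      (H.deleteEdges F).dist s t = (G.deleteEdges F).dist s t)

theorem Gadget.Wmain {σ mT : ℕ} (H : SimpleGraph (Γ.W σ mT))
    (hH : IsFTPreserver' (Γ.WG σ mT) H
      (Set.range fun c : Fin σ => (Sum.inl (c, Γ.s) : Γ.W σ mT)) Set.univ f) :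
    σ * q ^ f * mT ≤ H.edgeSet.ncard := by
  apply Γ.count
  intro c k t
  obtain ⟨hle, hpres⟩ := hH
  obtain ⟨hreachG, hdistG⟩ := Γ.Wdist c k t
  obtain ⟨hiff, hd⟩ := hpres (Γ.WF σ mT c k) (Γ.WF_sub c k) (Γ.WF_card c k)
    (Sum.inl (c, Γ.s)) ⟨c, rfl⟩ (Sum.inr t) (Set.mem_univ _)
  exact Γ.forcing c k t H hle (hiff.mpr hreachG) (by rw [hd hreachG, hdistG])

section Transport

variable {V W : Type*}

lemma iso_reachable {G : SimpleGraph V} {G' : SimpleGraph W} (φ : G ≃g G') {u v : V} :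
    G.Reachable u v ↔ G'.Reachable (φ u) (φ v) := by
  constructor
  · exact fun h => h.map φ.toHom
  · intro h
    have := h.map φ.symm.toHom
    simpa using this

lemma iso_dist {G : SimpleGraph V} {G' : SimpleGraph W} (φ : G ≃g G') (u v : V) :
    G'.dist (φ u) (φ v) = G.dist u v := by
  by_cases hr : G.Reachable u v
  · apply le_antisymm
    · obtain ⟨p, hp⟩ := hr.exists_walk_length_eq_dist
      calc G'.dist (φ u) (φ v) ≤ (p.map φ.toHom).length := dist_le _
      _ = G.dist u v := by rw [Walk.length_map, hp]
    · have hr' : G'.Reachable (φ u) (φ v) := (iso_reachable φ).1 hr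
      obtain ⟨p, hp⟩ := hr'.exists_walk_length_eq_dist
      have : G.dist u v ≤ (p.map φ.symm.toHom).length := by
        have h2 := dist_le (G := G)
          ((p.map φ.symm.toHom).copy (φ.symm_apply_apply u) (φ.symm_apply_apply v))
        simpa using h2
      rw [Walk.length_map] at this
      omega
  · have hr' : ¬ G'.Reachable (φ u) (φ v) := fun h => hr ((iso_reachable φ).2 h)
    simp [dist_eq_zero_of_not_reachable hr, dist_eq_zero_of_not_reachable hr']

def isoDeleteEdges (e : V ≃ W) (G : SimpleGraph V) (G' : SimpleGraph W)
    (h : ∀ u v, G.Adj u v ↔ G'.Adj (e u) (e v)) (F : Set (Sym2 V)) :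
    (G.deleteEdges F) ≃g (G'.deleteEdges (Sym2.map e '' F)) where
  toEquiv := e
  map_rel_iff' := by
    intro u v
    simp only [deleteEdges_adj]
    rw [← h u v]
    rw [show s(e u, e v) = Sym2.map e s(u,v) from (Sym2.map_pair_eq e u v).symm]
    rw [(Sym2.map.injective e.injective).mem_set_image]

lemma edgeSet_comap_ncard (e : V ≃ W) (H : SimpleGraph W) :
    (SimpleGraph.comap e H).edgeSet.ncard = H.edgeSet.ncard := by
  have himg : Sym2.map e '' (SimpleGraph.comap e H).edgeSet = H.edgeSet := by
    ext e'
    induction e' using Sym2.ind with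
    | _ a b =>
      simp only [Set.mem_image, mem_edgeSet]
      constructor
      · rintro ⟨e0, he0, heq⟩
        induction e0 using Sym2.ind with
        | _ u v =>
          rw [Sym2.map_pair_eq, Sym2.eq_iff] at heq
          have he0' : H.Adj (e u) (e v) := he0
          rcases heq with ⟨h1, h2⟩ | ⟨h1, h2⟩
          · rw [← h1, ← h2]; exact he0'
          · rw [← h1, ← h2]; exact he0'.symm
      · intro hadj
        refine ⟨s(e.symm a, e.symm b), ?_, ?_⟩
        · show H.Adj (e (e.symm a)) (e (e.symm b))
          simpa using hadj
        · rw [Sym2.map_pair_eq]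
          simp
  rw [← himg, Set.ncard_image_of_injective _ (Sym2.map.injective e.injective)]

theorem transport {f : ℕ} [Finite V] (G : SimpleGraph V) (S : Set V) {n : ℕ}
    (e : V ≃ Fin n) (E : ℕ)
    (hmain : ∀ H : SimpleGraph V, IsFTPreserver' G H S Set.univ f → E ≤ H.edgeSet.ncard) :
    ∀ H' : SimpleGraph (Fin n),
      IsFTPreserver' (SimpleGraph.comap e.symm G) H' (e '' S) Set.univ f →
        E ≤ H'.edgeSet.ncard := by
  intro H' hH'
  set G' := SimpleGraph.comap e.symm G with hG'
  have hadj : ∀ u v, G.Adj u v ↔ G'.Adj (e u) (e v) := by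
    intro u v
    rw [hG']
    simp
  set H := SimpleGraph.comap e H' with hH
  have hadjH : ∀ u v, H.Adj u v ↔ H'.Adj (e u) (e v) := by
    intro u v
    rw [hH]
    simp
  have hHle : H ≤ G := by
    intro u v h
    rw [hadjH] at h
    have := hH'.1 h
    rw [hG'] at this
    simp only [SimpleGraph.comap_adj, Equiv.symm_apply_apply] at this
    exact this
  have hpres : IsFTPreserver' G H S Set.univ f := by
    refine ⟨hHle, ?_⟩
    intro F hFsub hFcard s hs t _
    have hF'sub : Sym2.map e '' F ⊆ G'.edgeSet := by
      rintro e' ⟨e0, he0, rfl⟩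
      induction e0 using Sym2.ind with
      | _ u v =>
        rw [Sym2.map_pair_eq, mem_edgeSet, ← hadj]
        exact (mem_edgeSet _).mp (hFsub he0)
    have hF'card : (Sym2.map e '' F).ncard ≤ f := by
      rw [Set.ncard_image_of_injective _ (Sym2.map.injective e.injective)]
      exact hFcard
    obtain ⟨hiff, hd⟩ := hH'.2 (Sym2.map e '' F) hF'sub hF'card (e s) ⟨s, hs, rfl⟩
      (e t) (Set.mem_univ _)
    constructor
    · rw [iso_reachable (isoDeleteEdges e H H' hadjH F) (u := s) (v := t),
        iso_reachable (isoDeleteEdges e G G' hadj F) (u := s) (v := t)]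
      exact hiff
    · intro hr
      have hr' : (G'.deleteEdges (Sym2.map e '' F)).Reachable (e s) (e t) := by
        have := (iso_reachable (isoDeleteEdges e G G' hadj F) (u := s) (v := t)).mp hr
        exact this
      have hdd := hd hr'
      rw [← iso_dist (isoDeleteEdges e H H' hadjH F) s t,
        ← iso_dist (isoDeleteEdges e G G' hadj F) s t]
      exact hdd
  have := hmain H hpres
  calc E ≤ H.edgeSet.ncard := this
  _ = H'.edgeSet.ncard := edgeSet_comap_ncard e H'

end Transport

lemma key_nat (f B σ Nv q : ℕ) (hB : 1 ≤ B) (hNv : Nv ≤ B * q^(f+1)) :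
    (2*σ*Nv)^(2*f+1) * σ ≤ (4*B*(σ * q^f * (σ*Nv)))^(f+1) := by
  have h1 : (2*σ*Nv)^(2*f+1) * σ = 2^(2*f+1) * σ^(2*f+2) * Nv^(2*f+1) := by ring
  have h2 : (4*B*(σ * q^f * (σ*Nv)))^(f+1)
      = 4^(f+1) * B^(f+1) * σ^(2*f+2) * ((q^f)^(f+1) * Nv^(f+1)) := by ring
  rw [h1, h2]
  have h3 : Nv^(2*f+1) = Nv^(f+1) * Nv^f := by rw [← pow_add]; congr 1; omega
  have h4 : Nv^f ≤ B^f * (q^f)^(f+1) := by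
    calc Nv^f ≤ (B * q^(f+1))^f := Nat.pow_le_pow_left hNv f
    _ = B^f * (q^f)^(f+1) := by
        rw [mul_pow]
        congr 1
        rw [← pow_mul, ← pow_mul, Nat.mul_comm]
  have h5 : (2:ℕ)^(2*f+1) * B^f ≤ 4^(f+1) * B^(f+1) := by
    have e4 : (4:ℕ)^(f+1) = 2^(2*f+2) := by
      rw [show 2*f+2 = 2*(f+1) by omega, pow_mul]
      norm_num
    rw [e4]
    exact Nat.mul_le_mul (Nat.pow_le_pow_right (by omega) (by omega))
      (Nat.pow_le_pow_right hB (by omega))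
  calc 2^(2*f+1) * σ^(2*f+2) * Nv^(2*f+1)
      = 2^(2*f+1) * σ^(2*f+2) * (Nv^(f+1) * Nv^f) := by rw [h3]
  _ ≤ 2^(2*f+1) * σ^(2*f+2) * (Nv^(f+1) * (B^f * (q^f)^(f+1))) := by gcongr
  _ = (2^(2*f+1) * B^f) * σ^(2*f+2) * ((q^f)^(f+1) * Nv^(f+1)) := by ring
  _ ≤ (4^(f+1) * B^(f+1)) * σ^(2*f+2) * ((q^f)^(f+1) * Nv^(f+1)) := by gcongr
  _ = 4^(f+1) * B^(f+1) * σ^(2*f+2) * ((q^f)^(f+1) * Nv^(f+1)) := by ring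

lemma key_real (f B n σ E : ℕ) (hB : 1 ≤ B)
    (hkey : n^(2*f+1) * σ ≤ (4*B*E)^(f+1)) :
    (1/(4*(B:ℝ))) * (n:ℝ) ^ ((2:ℝ) - 1/((f:ℝ)+1)) * (σ:ℝ) ^ (1/((f:ℝ)+1)) ≤ (E:ℝ) := by
  have hf1 : ((f:ℝ)+1) ≠ 0 := by positivity
  have hβpos : (0:ℝ) < 1/((f:ℝ)+1) := by positivity
  have hexp : (2:ℝ) - 1/((f:ℝ)+1) = ((2*f+1 : ℕ) : ℝ) * (1/((f:ℝ)+1)) := by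
    push_cast
    field_simp
    ring
  have h1 : (n:ℝ) ^ ((2:ℝ) - 1/((f:ℝ)+1))
      = (((n^(2*f+1) : ℕ)):ℝ) ^ (1/((f:ℝ)+1)) := by
    rw [hexp, Real.rpow_mul (by positivity), Real.rpow_natCast]
    push_cast
    ring_nf
  have h2 : (((n^(2*f+1) : ℕ)):ℝ) ^ (1/((f:ℝ)+1)) * (σ:ℝ) ^ (1/((f:ℝ)+1))
      = (((n^(2*f+1) * σ : ℕ)):ℝ) ^ (1/((f:ℝ)+1)) := by
    rw [← Real.mul_rpow (by positivity) (by positivity)]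
    push_cast
    ring_nf
  have h3 : (((n^(2*f+1) * σ : ℕ)):ℝ) ^ (1/((f:ℝ)+1))
      ≤ ((((4*B*E)^(f+1) : ℕ)):ℝ) ^ (1/((f:ℝ)+1)) := by
    apply Real.rpow_le_rpow (by positivity) ?_ hβpos.le
    exact_mod_cast hkey
  have h4 : ((((4*B*E)^(f+1) : ℕ)):ℝ) ^ (1/((f:ℝ)+1)) = 4*(B:ℝ)*E := by
    push_cast
    rw [← Real.rpow_natCast (4*(B:ℝ)*E) (f+1), ← Real.rpow_mul (by positivity)]
    have : ((f:ℝ)+1) * (1/((f:ℝ)+1)) = 1 := by field_simp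
    push_cast
    rw [this, Real.rpow_one]
  have hB4 : (0:ℝ) < 4*(B:ℝ) := by positivity
  rw [mul_assoc, h1, h2]
  calc (1/(4*(B:ℝ))) * (((n^(2*f+1) * σ : ℕ)):ℝ) ^ (1/((f:ℝ)+1))
      ≤ (1/(4*(B:ℝ))) * (4*(B:ℝ)*E) := by
        apply mul_le_mul_of_nonneg_left _ (by positivity)
        rw [← h4]
        exact h3
  _ = E := by field_simp

theorem statement10' (f : ℕ) (hf : 1 ≤ f) :
    ∃ c : ℝ, 0 < c ∧
      ∀ σ : ℕ, 1 ≤ σ → ∀ N : ℕ, ∃ n : ℕ, N ≤ n ∧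
        ∃ (G : SimpleGraph (Fin n)) (S : Set (Fin n)), S.ncard = σ ∧
          ∀ H : SimpleGraph (Fin n), IsFTPreserver' G H S Set.univ f →
            c * (n : ℝ) ^ ((2 : ℝ) - 1 / ((f : ℝ) + 1))
              * (σ : ℝ) ^ (1 / ((f : ℝ) + 1)) ≤ (H.edgeSet.ncard : ℝ) := by
  obtain ⟨A, B, hB, hgad⟩ := gadget_exists f
  refine ⟨1/(4*(B:ℝ)), by positivity, ?_⟩
  intro σ hσ N
  have hq : 1 ≤ max N 1 := le_max_right N 1
  obtain ⟨Γ, hD, hNv, hqcard⟩ := hgad (max N 1) hq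
  haveI := Γ.finV
  haveI : Nonempty Γ.V := ⟨Γ.s⟩
  have hNv1 : 1 ≤ Nat.card Γ.V := Nat.card_pos
  obtain ⟨n, ⟨e⟩⟩ := Finite.exists_equiv_fin (Γ.W σ (σ * Nat.card Γ.V))
  have hncard : Nat.card (Γ.W σ (σ * Nat.card Γ.V)) = σ * Nat.card Γ.V + σ * Nat.card Γ.V := by
    rw [Nat.card_sum, Nat.card_prod]
    simp
  have hn : n = 2 * σ * Nat.card Γ.V := by
    have h0 := (Nat.card_eq_of_equiv_fin e).symm
    have h1 : (2:ℕ) * σ * Nat.card Γ.V = σ * Nat.card Γ.V + σ * Nat.card Γ.V := by ring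
    omega
  refine ⟨n, ?_, ?_⟩
  · have h1 : max N 1 ≤ Nat.card Γ.V := hqcard hf
    have h2 : Nat.card Γ.V ≤ 2 * σ * Nat.card Γ.V := by
      have := Nat.mul_le_mul (show 1 ≤ 2*σ by omega) (le_refl (Nat.card Γ.V))
      simpa using this
    have h3 : N ≤ max N 1 := le_max_left N 1
    omega
  · refine ⟨SimpleGraph.comap e.symm (Γ.WG σ (σ * Nat.card Γ.V)),
      e '' (Set.range fun c : Fin σ => (Sum.inl (c, Γ.s) : Γ.W σ (σ * Nat.card Γ.V))),
      ?_, ?_⟩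
    · rw [Set.ncard_image_of_injective _ e.injective]
      have hinj : Function.Injective
          (fun c : Fin σ => (Sum.inl (c, Γ.s) : Γ.W σ (σ * Nat.card Γ.V))) := by
        intro a b hab
        injection hab with h'
        injection h' with h1 _
      rw [← Set.image_univ, Set.ncard_image_of_injective _ hinj, Set.ncard_univ]
      simp
    · intro H hH
      have hE := transport (f := f) (Γ.WG σ (σ * Nat.card Γ.V)) _ e
        (σ * (max N 1)^f * (σ * Nat.card Γ.V)) (fun H0 hH0 => Γ.Wmain H0 hH0) H hH
      have hkey := key_nat f B σ (Nat.card Γ.V) (max N 1) hB hNv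
      have hkeyn : n^(2*f+1) * σ
          ≤ (4*B*(σ * (max N 1)^f * (σ * Nat.card Γ.V)))^(f+1) := by
        rw [hn]
        exact hkey
      have hreal := key_real f B n σ (σ * (max N 1)^f * (σ * Nat.card Γ.V)) hB hkeyn
      calc 1/(4*(B:ℝ)) * (n : ℝ) ^ ((2 : ℝ) - 1 / ((f : ℝ) + 1))
            * (σ : ℝ) ^ (1 / ((f : ℝ) + 1))
          ≤ ((σ * (max N 1)^f * (σ * Nat.card Γ.V) : ℕ) : ℝ) := by
            exact_mod_cast hreal
      _ ≤ (H.edgeSet.ncard : ℝ) := by exact_mod_cast hE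

end St10

/-- For every fixed `f ≥ 1` there is a constant `c_f > 0` such that for
every `σ ≥ 1` there are infinitely many `n` admitting an `n`-vertex graph `G` and a set `S`
of `σ` vertices for which every `f`-FT `S × V` distance preserver of `G` has at least
`c_f · n^{2 - 1/(f+1)} · σ^{1/(f+1)}` edges. -/
theorem statement10 (f : ℕ) (hf : 1 ≤ f) :
    ∃ c : ℝ, 0 < c ∧
      ∀ σ : ℕ, 1 ≤ σ → ∀ N : ℕ, ∃ n : ℕ, N ≤ n ∧
        ∃ (G : SimpleGraph (Fin n)) (S : Set (Fin n)), S.ncard = σ ∧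
          ∀ H : SimpleGraph (Fin n), IsFTPreserver G H S Set.univ f →
            c * (n : ℝ) ^ ((2 : ℝ) - 1 / ((f : ℝ) + 1)) * (σ : ℝ) ^ (1 / ((f : ℝ) + 1))
              ≤ (H.edgeSet.ncard : ℝ) := by
  obtain ⟨c, hc, h⟩ := St10.statement10' f hf
  refine ⟨c, hc, fun σ hσ N => ?_⟩
  obtain ⟨n, hn, G, S, hS, hH⟩ := h σ hσ N
  exact ⟨n, hn, G, S, hS, fun H hpres => hH H hpres⟩
end

section
/- There exists an absolute constant C > 0 with the following property. Let G be a finite simple undirected unweighted graph on n vertices, let f ≥ 0 and 1 ≤ σ ≤ n be integers, and let g ≥ 0 be a real number. If for every vertex subset S ⊆ V with |S| = σ there exists an f-FT S×S distance preserver of G with at most g edges, then G admits an f-FT +4 additive spanner with at most g + C · (f+1) · n² / σ edges. -/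
open SimpleGraph

lemma aux_transfer {V : Type*} {A B : SimpleGraph V} {bad : V → Prop}
    (hAB : ∀ u v, A.Adj u v → bad u → B.Adj u v) :
    ∀ {a b : V} (W : A.Walk a b), W.support.Nodup → (∀ x ∈ W.support, x ≠ b → bad x) →
    ∃ W' : B.Walk a b, W'.length = W.length := by
  intro a b W
  induction W with
  | nil => exact fun _ _ => ⟨.nil, rfl⟩
  | @cons a c b h p ih =>
    intro hnd hbad
    rw [Walk.support_cons, List.nodup_cons] at hnd
    have hab : a ≠ b := by
      intro hEq; subst hEq
      exact hnd.1 p.end_mem_support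
    have hba : bad a := hbad a (Walk.start_mem_support _) hab
    obtain ⟨W', hW'⟩ := ih hnd.2 (fun x hx hne => hbad x (by rw [Walk.support_cons]; simp [hx]) hne)
    exact ⟨.cons (hAB _ _ h hba) W', by simp [hW']⟩

lemma aux_split {V : Type*} {A : SimpleGraph V} (good : V → Prop) :
    ∀ {a b : V} (W : A.Walk a b), (∃ x ∈ W.support, good x) →
    ∃ (u : V) (W1 : A.Walk a u) (W2 : A.Walk u b),
      W = W1.append W2 ∧ good u ∧ ∀ x ∈ W1.support, x ≠ u → ¬ good x := by
  intro a b W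
  induction W with
  | @nil a =>
    rintro ⟨x, hx, hg⟩
    have : x = a := by simpa using hx
    subst this
    exact ⟨x, .nil, .nil, rfl, hg, by simp⟩
  | @cons a c b h p ih =>
    intro hex
    by_cases hga : good a
    · exact ⟨a, .nil, .cons h p, rfl, hga, by simp⟩
    · have hex' : ∃ x ∈ p.support, good x := by
        obtain ⟨x, hx, hg⟩ := hex
        rw [Walk.support_cons] at hx
        rcases List.mem_cons.mp hx with rfl | hx
        · exact absurd hg hga
        · exact ⟨x, hx, hg⟩
      obtain ⟨u, W1, W2, heq, hgu, hb⟩ := ih hex'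
      refine ⟨u, .cons h W1, W2, by rw [Walk.cons_append, ← heq], hgu, ?_⟩
      intro x hx hne
      rw [Walk.support_cons] at hx
      rcases List.mem_cons.mp hx with rfl | hx
      · exact hga
      · exact hb x hx hne


set_option maxHeartbeats 1000000 in
/-- There is an absolute constant `C > 0` such that: if a finite `n`-vertex
graph `G` is such that every subset `S` of `σ` vertices admits an `f`-FT `S × S` distance
preserver with at most `g` edges (where `1 ≤ σ ≤ n` and `g ≥ 0`), then `G` admits an `f`-FT
`+4` additive spanner with at most `g + C·(f+1)·n²/σ` edges. -/
theorem statement13 :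
    ∃ C : ℝ, 0 < C ∧
      ∀ (V : Type) [Fintype V], ∀ (G : SimpleGraph V) (f σ : ℕ) (g : ℝ),
        1 ≤ σ → σ ≤ Fintype.card V → 0 ≤ g →
        (∀ S : Set V, S.ncard = σ →
          ∃ H : SimpleGraph V, IsFTPreserver G H S S f ∧ (H.edgeSet.ncard : ℝ) ≤ g) →
        ∃ H : SimpleGraph V, IsFTAddSpanner G H f 4 ∧
          (H.edgeSet.ncard : ℝ)
            ≤ g + C * ((f : ℝ) + 1) * (Fintype.card V : ℝ) ^ 2 / (σ : ℝ) := by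
  classical
  refine ⟨4, by norm_num, ?_⟩
  intro V _ G f σ g hσ1 hσn hg hpres
  set n := Fintype.card V with hn
  set T : ℕ := (f + 1) * n / σ + 1 with hT
  set cS : Finset V → V → ℕ := fun S v => (S.filter (fun w => G.Adj v w)).card with hcS
  set Φ : Finset V → ℕ := fun S => ∑ v : V, min (cS S v) (f + 1) with hΦ
  have hΦle : ∀ S, Φ S ≤ n * (f + 1) := by
    intro S
    calc Φ S ≤ ∑ _v : V, (f + 1) := Finset.sum_le_sum (fun v _ => min_le_right _ _)
    _ = n * (f + 1) := by simp [hn]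
  obtain ⟨S₀, hS₀mem, hS₀max⟩ := Finset.exists_max_image
    ((Finset.univ : Finset (Finset V)).filter (fun S => T * S.card ≤ Φ S)) Finset.card
    ⟨∅, by simp⟩
  rw [Finset.mem_filter] at hS₀mem
  have hS₀pot := hS₀mem.2
  have hTσ : n * (f + 1) < T * σ := by
    have h2 := Nat.div_add_mod ((f + 1) * n) σ
    have h3 : (f + 1) * n % σ < σ := Nat.mod_lt _ (by omega)
    have h4 : T * σ = σ * ((f + 1) * n / σ) + σ := by rw [hT]; ring
    calc n * (f + 1) = (f + 1) * n := mul_comm _ _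
    _ = σ * ((f + 1) * n / σ) + (f + 1) * n % σ := h2.symm
    _ < σ * ((f + 1) * n / σ) + σ := Nat.add_lt_add_left h3 _
    _ = T * σ := h4.symm
  have hS₀card : S₀.card ≤ σ := by
    by_contra hlt
    push_neg at hlt
    have h1 : T * σ ≤ T * S₀.card := Nat.mul_le_mul_left _ (le_of_lt hlt)
    have h2 := hΦle S₀
    exact absurd ((h1.trans hS₀pot).trans h2) (not_le.mpr hTσ)
  set unsat : V → Prop := fun v => cS S₀ v < f + 1 with hunsat
  set good : V → Prop := fun v => v ∈ S₀ ∨ ¬ unsat v with hgood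
  have hmax : ∀ u ∉ S₀, (Finset.univ.filter (fun w => G.Adj u w ∧ unsat w)).card < T := by
    intro u hu
    by_contra hge
    push_neg at hge
    set S₁ := insert u S₀ with hS₁
    have hpoint : ∀ v : V, min (cS S₀ v) (f + 1) + (if G.Adj u v ∧ unsat v then 1 else 0)
        ≤ min (cS S₁ v) (f + 1) := by
      intro v
      by_cases hc : G.Adj u v ∧ unsat v
      · rw [if_pos hc]
        have h1 : cS S₁ v = cS S₀ v + 1 := by
          show ((insert u S₀).filter (fun w => G.Adj v w)).card = _
          rw [Finset.filter_insert, if_pos hc.1.symm,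
            Finset.card_insert_of_notMem (fun hmem => hu (Finset.mem_of_mem_filter _ hmem))]
        have h2 : cS S₀ v < f + 1 := hc.2
        rw [h1, min_eq_left (by omega), min_eq_left (by omega)]
      · rw [if_neg hc, add_zero]
        have hle : cS S₀ v ≤ cS S₁ v :=
          Finset.card_le_card (Finset.filter_subset_filter _ (Finset.subset_insert _ _))
        exact min_le_min hle le_rfl
    have hΦ₁ : Φ S₀ + (Finset.univ.filter (fun w => G.Adj u w ∧ unsat w)).card ≤ Φ S₁ := by
      rw [Finset.card_filter]
      show (∑ v : V, min (cS S₀ v) (f + 1)) + _ ≤ ∑ v : V, min (cS S₁ v) (f + 1)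
      rw [← Finset.sum_add_distrib]
      exact Finset.sum_le_sum fun v _ => hpoint v
    have hcard₁ : S₁.card = S₀.card + 1 := Finset.card_insert_of_notMem hu
    have hmem₁ : T * S₁.card ≤ Φ S₁ := by
      calc T * S₁.card = T * S₀.card + T := by rw [hcard₁]; ring
      _ ≤ Φ S₀ + (Finset.univ.filter (fun w => G.Adj u w ∧ unsat w)).card :=
          add_le_add hS₀pot hge
      _ ≤ Φ S₁ := hΦ₁
    have := hS₀max S₁ (Finset.mem_filter.mpr ⟨Finset.mem_univ _, hmem₁⟩)
    omega
  -- pad S₀ to S' of size σ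
  obtain ⟨S', hS₀S', hS'card⟩ := Finset.exists_superset_card_eq hS₀card hσn
  obtain ⟨H', hH'pres, hH'card⟩ := hpres ↑S' (by rw [Set.ncard_coe_finset, hS'card])
  obtain ⟨hH'le, hH'dist⟩ := hH'pres
  -- cluster edges
  have hDv : ∀ v : V, ∃ D : Finset V, D ⊆ S₀.filter (fun w => G.Adj v w) ∧ D.card ≤ f + 1 ∧
      (¬ unsat v → D.card = f + 1) := by
    intro v
    by_cases hv : unsat v
    · exact ⟨∅, by simp, by simp, fun h => absurd hv h⟩
    · have hle : f + 1 ≤ (S₀.filter (fun w => G.Adj v w)).card := not_lt.mp hv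
      obtain ⟨D, hD, hDcard⟩ := Finset.exists_subset_card_eq hle
      exact ⟨D, hD, le_of_eq hDcard, fun _ => hDcard⟩
  choose Dv hDvsub hDvle hDvcard using hDv
  set Cf : Finset (Sym2 V) := Finset.univ.biUnion (fun v => (Dv v).image (fun w => s(v, w)))
    with hCf
  set Bf : Finset (Sym2 V) := Finset.univ.biUnion
    (fun u => ((Finset.univ.filter (fun w => G.Adj u w ∧ ¬ good w)).image (fun w => s(u, w))))
    with hBf
  set K := Cf ∪ Bf with hK
  set H : SimpleGraph V := H' ⊔ SimpleGraph.fromEdgeSet ↑K with hHdef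
  have hKsub : ∀ e ∈ K, e ∈ G.edgeSet := by
    intro e he
    rw [hK, Finset.mem_union] at he
    rcases he with he | he
    · obtain ⟨v, -, he⟩ := Finset.mem_biUnion.mp he
      obtain ⟨w, hw, rfl⟩ := Finset.mem_image.mp he
      exact (Finset.mem_filter.mp (hDvsub v hw)).2
    · obtain ⟨u, -, he⟩ := Finset.mem_biUnion.mp he
      obtain ⟨w, hw, rfl⟩ := Finset.mem_image.mp he
      exact (Finset.mem_filter.mp hw).2.1
  have hHle : H ≤ G := by
    rw [hHdef]
    refine sup_le hH'le ?_
    intro u v huv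
    rw [fromEdgeSet_adj] at huv
    exact hKsub _ (Finset.mem_coe.mp huv.1)
  -- edge counting
  have hCfcard : Cf.card ≤ n * (f + 1) := by
    calc Cf.card ≤ ∑ v : V, ((Dv v).image (fun w => s(v, w))).card := Finset.card_biUnion_le
    _ ≤ ∑ _v : V, (f + 1) := Finset.sum_le_sum (fun v _ =>
        le_trans Finset.card_image_le (hDvle v))
    _ = n * (f + 1) := by simp [hn]
  have hBfcard : Bf.card ≤ n * T + n * f := by
    have h1 : Bf.card ≤ ∑ u : V, (Finset.univ.filter (fun w => G.Adj u w ∧ ¬ good w)).card :=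
      Finset.card_biUnion_le.trans (Finset.sum_le_sum fun u _ => Finset.card_image_le)
    have hsplit := Finset.sum_add_sum_compl S₀
      (fun u => (Finset.univ.filter (fun w => G.Adj u w ∧ ¬ good w)).card)
    have hout : ∑ u ∈ S₀ᶜ, (Finset.univ.filter (fun w => G.Adj u w ∧ ¬ good w)).card ≤ n * T := by
      have hb : ∀ u ∈ S₀ᶜ,
          (Finset.univ.filter (fun w => G.Adj u w ∧ ¬ good w)).card ≤ T := by
        intro u hu
        rw [Finset.mem_compl] at hu
        have hsub : Finset.univ.filter (fun w => G.Adj u w ∧ ¬ good w) ⊆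
            Finset.univ.filter (fun w => G.Adj u w ∧ unsat w) := by
          apply Finset.monotone_filter_right
          intro w _ hw
          refine ⟨hw.1, ?_⟩
          by_contra hns
          exact hw.2 (Or.inr hns)
        exact le_trans (Finset.card_le_card hsub) (le_of_lt (hmax u hu))
      calc ∑ u ∈ S₀ᶜ, (Finset.univ.filter (fun w => G.Adj u w ∧ ¬ good w)).card
          ≤ S₀ᶜ.card • T := Finset.sum_le_card_nsmul _ _ _ hb
      _ = S₀ᶜ.card * T := by rw [smul_eq_mul]
      _ ≤ n * T := by
          have h2 := Finset.card_le_univ (S₀ᶜ : Finset V)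
          rw [← hn] at h2
          exact Nat.mul_le_mul_right _ h2
    have hin : ∑ u ∈ S₀, (Finset.univ.filter (fun w => G.Adj u w ∧ ¬ good w)).card ≤ n * f := by
      have hrw : ∀ u : V, (Finset.univ.filter (fun w => G.Adj u w ∧ ¬ good w)).card
          = ∑ w : V, if G.Adj u w ∧ ¬ good w then 1 else 0 := fun u => Finset.card_filter _ _
      calc ∑ u ∈ S₀, (Finset.univ.filter (fun w => G.Adj u w ∧ ¬ good w)).card
          = ∑ u ∈ S₀, ∑ w : V, (if G.Adj u w ∧ ¬ good w then 1 else 0) := by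
            exact Finset.sum_congr rfl fun u _ => hrw u
      _ = ∑ w : V, ∑ u ∈ S₀, (if G.Adj u w ∧ ¬ good w then 1 else 0) := Finset.sum_comm
      _ ≤ ∑ _w : V, f := by
          refine Finset.sum_le_sum ?_
          intro w _
          by_cases hbw : ¬ good w
          · have heq : ∑ u ∈ S₀, (if G.Adj u w ∧ ¬ good w then 1 else 0)
                = (S₀.filter (fun u => G.Adj u w)).card := by
              rw [Finset.card_filter]
              exact Finset.sum_congr rfl fun u _ => by simp [hbw]
            rw [heq]
            have hun : unsat w := by
              by_contra hns
              exact hbw (Or.inr hns)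
            have hflip : (S₀.filter (fun u => G.Adj u w)).card = cS S₀ w := by
              show _ = (S₀.filter (fun u => G.Adj w u)).card
              congr 1
              ext x
              simp [Finset.mem_filter, G.adj_comm]
            have : cS S₀ w < f + 1 := hun
            omega
          · have : ∀ u ∈ S₀, (if G.Adj u w ∧ ¬ good w then 1 else 0) = 0 := fun u _ =>
              if_neg (fun hc => hbw hc.2)
            rw [Finset.sum_congr rfl this]
            simp
      _ = n * f := by simp [hn]
    omega
  -- Assemble the spanner and prove its properties
  refine ⟨H, ⟨hHle, ?_⟩, ?_⟩
  · -- f-FT +4 additive spanner property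
    intro F hFG hFf s t hst
    have hbadedge : ∀ u v : V, (G.deleteEdges F).Adj u v → ¬ good u →
        (H.deleteEdges F).Adj u v := by
      intro u v huv hbu
      rw [deleteEdges_adj] at huv
      rw [deleteEdges_adj]
      refine ⟨?_, huv.2⟩
      rw [hHdef, sup_adj]
      right
      rw [fromEdgeSet_adj]
      refine ⟨?_, huv.1.ne⟩
      rw [Finset.mem_coe, hK, Finset.mem_union]
      right
      rw [hBf]
      refine Finset.mem_biUnion.mpr ⟨v, Finset.mem_univ _, ?_⟩
      refine Finset.mem_image.mpr ⟨u, ?_, Sym2.eq_swap⟩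
      exact Finset.mem_filter.mpr ⟨Finset.mem_univ _, huv.1.symm, hbu⟩
    have hcluster : ∀ u : V, good u →
        ∃ x, x ∈ S' ∧ ∃ (Wh : (H.deleteEdges F).Walk u x) (Wd : (G.deleteEdges F).Walk u x),
          Wh.length ≤ 1 ∧ Wd.length ≤ 1 := by
      intro u hgu
      have hgu' : u ∈ S₀ ∨ ¬ unsat u := hgu
      rcases hgu' with hmem | hns
      · exact ⟨u, hS₀S' hmem, .nil, .nil, by simp, by simp⟩
      · have hcard : ((Dv u).image (fun w => s(u, w))).card = f + 1 := by
          rw [Finset.card_image_of_injOn, hDvcard u hns]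
          intro w _ w' _ hww
          exact Sym2.congr_right.mp hww
        have hex : ∃ w ∈ Dv u, s(u, w) ∉ F := by
          by_contra hcon
          push_neg at hcon
          have hsub : ↑((Dv u).image (fun w => s(u, w))) ⊆ F := by
            intro e he
            obtain ⟨w, hw, rfl⟩ := Finset.mem_image.mp (Finset.mem_coe.mp he)
            exact hcon w hw
          have hcc := Set.ncard_le_ncard hsub (Set.toFinite F)
          rw [Set.ncard_coe_finset, hcard] at hcc
          omega
        obtain ⟨w, hw, hwF⟩ := hex
        have hwspec := Finset.mem_filter.mp (hDvsub u hw)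
        have hadj : G.Adj u w := hwspec.2
        have hHadj : (H.deleteEdges F).Adj u w := by
          rw [deleteEdges_adj]
          refine ⟨?_, hwF⟩
          rw [hHdef, sup_adj]
          right
          rw [fromEdgeSet_adj]
          refine ⟨?_, hadj.ne⟩
          rw [Finset.mem_coe, hK, Finset.mem_union]
          left
          exact Finset.mem_biUnion.mpr ⟨u, Finset.mem_univ _, Finset.mem_image_of_mem _ hw⟩
        have hDadj : (G.deleteEdges F).Adj u w := by
          rw [deleteEdges_adj]; exact ⟨hadj, hwF⟩
        exact ⟨w, hS₀S' hwspec.1, .cons hHadj .nil, .cons hDadj .nil, by simp, by simp⟩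
    obtain ⟨W, hWp, hWlen⟩ := hst.exists_path_of_dist
    by_cases hall : ∀ x ∈ W.support, ¬ good x
    · obtain ⟨W', hW'len⟩ := aux_transfer hbadedge W hWp.support_nodup (fun x hx _ => hall x hx)
      refine ⟨⟨W'⟩, ?_⟩
      have hd := dist_le W'
      omega
    · push_neg at hall
      obtain ⟨x0, hx0, hgx0⟩ := hall
      obtain ⟨u, W1, W2', hWeq, hgu, hW1bad⟩ := aux_split good W ⟨x0, hx0, hgx0⟩
      obtain ⟨v, W3r, W2r, hW2eq, hgv, hW3bad⟩ := aux_split good W2'.reverse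
        ⟨u, Walk.end_mem_support _, hgu⟩
      have hWnd : W.support.Nodup := hWp.support_nodup
      have hnd1 : W1.support.Nodup := by
        rw [hWeq, Walk.support_append] at hWnd
        exact hWnd.of_append_left
      have hnd2' : W2'.support.Nodup := by
        rw [hWeq, Walk.support_append] at hWnd
        rw [W2'.support_eq_cons]
        refine List.nodup_cons.mpr ⟨?_, hWnd.of_append_right⟩
        intro hmem
        exact (List.disjoint_of_nodup_append hWnd) W1.end_mem_support hmem
      have hnd3 : W3r.support.Nodup := by
        have hrev : W2'.reverse.support.Nodup := by
          rw [Walk.support_reverse]; exact List.nodup_reverse.mpr hnd2'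
        rw [hW2eq, Walk.support_append] at hrev
        exact hrev.of_append_left
      obtain ⟨Wa, hWalen⟩ := aux_transfer hbadedge W1 hnd1 hW1bad
      obtain ⟨Wb, hWblen⟩ := aux_transfer hbadedge W3r hnd3 hW3bad
      obtain ⟨xu, hxu, Wcu, Wdu, hWcu, hWdu⟩ := hcluster u hgu
      obtain ⟨xv, hxv, Wcv, Wdv, hWcv, hWdv⟩ := hcluster v hgv
      have hdmid : (G.deleteEdges F).dist xu xv ≤ Wdu.length + (W2r.length + Wdv.length) := by
        have hdd := dist_le (Wdu.reverse.append (W2r.reverse.append Wdv))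
        simpa [Walk.length_append, Walk.length_reverse] using hdd
      have hreach2 : (G.deleteEdges F).Reachable xu xv :=
        ⟨Wdu.reverse.append (W2r.reverse.append Wdv)⟩
      have hpres2 := hH'dist F hFG hFf xu (Finset.mem_coe.mpr hxu) xv (Finset.mem_coe.mpr hxv)
      have hreachH' : (H'.deleteEdges F).Reachable xu xv := hpres2.1.mpr hreach2
      have hdisteq := hpres2.2 hreach2
      obtain ⟨Wm', hWm'⟩ := hreachH'.exists_walk_length_eq_dist
      have hmono : H'.deleteEdges F ≤ H.deleteEdges F := by
        intro a b hab
        rw [deleteEdges_adj] at hab ⊢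
        refine ⟨?_, hab.2⟩
        rw [hHdef, sup_adj]
        exact Or.inl hab.1
      have hWmlen : (Wm'.mapLe hmono).length = Wm'.length := by simp
      have hdle := dist_le (Wa.append ((Wcu.append ((Wm'.mapLe hmono).append Wcv.reverse)).append Wb.reverse))
      have hWTlen : (Wa.append ((Wcu.append ((Wm'.mapLe hmono).append Wcv.reverse)).append Wb.reverse)).length
          = Wa.length + ((Wcu.length + ((Wm'.mapLe hmono).length + Wcv.length)) + Wb.length) := by
        simp [Walk.length_append, Walk.length_reverse]
      refine ⟨⟨Wa.append ((Wcu.append ((Wm'.mapLe hmono).append Wcv.reverse)).append Wb.reverse)⟩, ?_⟩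
      have hlen1 : W.length = W1.length + W2'.length := by
        rw [hWeq, Walk.length_append]
      have hlen2 : W2'.length = W3r.length + W2r.length := by
        have hc := congrArg Walk.length hW2eq
        rw [Walk.length_reverse, Walk.length_append] at hc
        omega
      have hWmlen2 : (Wm'.mapLe hmono).length ≤ W2r.length + 2 := by
        rw [hWmlen, hWm', hdisteq]
        omega
      omega
  · -- cardinality bound
    have hunion : H.edgeSet ⊆ H'.edgeSet ∪ (↑K : Set (Sym2 V)) := by
      rw [hHdef, edgeSet_sup]
      apply Set.union_subset_union_right
      rw [edgeSet_fromEdgeSet]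
      exact Set.diff_subset
    have h2 : H.edgeSet.ncard ≤ H'.edgeSet.ncard + K.card := by
      calc H.edgeSet.ncard ≤ (H'.edgeSet ∪ (↑K : Set (Sym2 V))).ncard :=
        Set.ncard_le_ncard hunion (Set.toFinite _)
      _ ≤ H'.edgeSet.ncard + (↑K : Set (Sym2 V)).ncard := Set.ncard_union_le _ _
      _ = H'.edgeSet.ncard + K.card := by rw [Set.ncard_coe_finset]
    have hKn : K.card ≤ n * (f + 1) + (n * T + n * f) := by
      rw [hK]
      have hku := Finset.card_union_le Cf Bf
      omega
    have hn1 : (1:ℝ) ≤ (n:ℝ) := by exact_mod_cast le_trans hσ1 hσn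
    have hs1 : (1:ℝ) ≤ (σ:ℝ) := by exact_mod_cast hσ1
    have hsn' : (σ:ℝ) ≤ (n:ℝ) := by exact_mod_cast hσn
    have hs0 : (0:ℝ) < (σ:ℝ) := by linarith
    have hf0 : (0:ℝ) ≤ (f:ℝ) := Nat.cast_nonneg f
    have hn0 : (0:ℝ) ≤ (n:ℝ) := by linarith
    have hTreal : (T:ℝ) ≤ ((f:ℝ)+1) * n / σ + 1 := by
      have h := Nat.cast_div_le (α := ℝ) (m := (f+1)*n) (n := σ)
      rw [hT]
      push_cast
      push_cast at h
      linarith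
    have hxx : (n:ℝ) * σ ≤ (n:ℝ)^2 := by nlinarith
    have hKreal : (K.card : ℝ) ≤ 4 * ((f:ℝ)+1) * (n:ℝ)^2 / σ := by
      have h3 : (K.card:ℝ) ≤ (n:ℝ)*((f:ℝ)+1) + ((n:ℝ)*(T:ℝ) + (n:ℝ)*(f:ℝ)) := by
        exact_mod_cast hKn
      have h4 : (n:ℝ)*(T:ℝ) ≤ (n:ℝ)*(((f:ℝ)+1) * n / σ + 1) :=
        mul_le_mul_of_nonneg_left hTreal hn0
      rw [le_div_iff₀ hs0]
      have e1 : (n:ℝ)*(T:ℝ)*σ ≤ ((f:ℝ)+1)*(n:ℝ)^2 + (n:ℝ)*σ := by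
        calc (n:ℝ)*(T:ℝ)*σ ≤ (n:ℝ)*(((f:ℝ)+1) * n / σ + 1)*σ :=
          mul_le_mul_of_nonneg_right h4 hs0.le
        _ = ((f:ℝ)+1)*(n:ℝ)^2 + (n:ℝ)*σ := by field_simp
      have e2 : (n:ℝ)*((f:ℝ)+1)*σ ≤ ((f:ℝ)+1)*(n:ℝ)^2 := by nlinarith
      have e3 : (n:ℝ)*(f:ℝ)*σ ≤ ((f:ℝ)+1)*(n:ℝ)^2 := by nlinarith
      have e4 : (n:ℝ)*σ ≤ ((f:ℝ)+1)*(n:ℝ)^2 := by nlinarith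
      calc (K.card:ℝ)*σ ≤ ((n:ℝ)*((f:ℝ)+1) + ((n:ℝ)*(T:ℝ) + (n:ℝ)*(f:ℝ)))*σ :=
        mul_le_mul_of_nonneg_right h3 hs0.le
      _ = (n:ℝ)*((f:ℝ)+1)*σ + ((n:ℝ)*(T:ℝ)*σ + (n:ℝ)*(f:ℝ)*σ) := by ring
      _ ≤ ((f:ℝ)+1)*(n:ℝ)^2 + ((((f:ℝ)+1)*(n:ℝ)^2 + (n:ℝ)*σ) + ((f:ℝ)+1)*(n:ℝ)^2) := by
        linarith
      _ ≤ 4 * ((f:ℝ)+1) * (n:ℝ)^2 := by linarith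
    calc ((H.edgeSet.ncard : ℝ)) ≤ (H'.edgeSet.ncard : ℝ) + (K.card:ℝ) := by exact_mod_cast h2
    _ ≤ g + 4 * ((f:ℝ)+1) * (n:ℝ)^2 / σ := by
      have := add_le_add hH'card hKreal
      linarith
end

section
/- Let G be a finite simple undirected unweighted graph and let π be a tiebreaking scheme on G with the restoration-by-concatenation property: for all vertices s, t and every edge e with s and t connected in G \ {e}, there exists a vertex x such that π(s,x) and π(t,x) avoid e and length(π(s,x)) + length(π(t,x)) = dist_{G \ {e}}(s,t). For a vertex s, let T_s be the subgraph of G whose edge set is the union of the edge sets of the paths π(s,x) over all vertices x connected to s in G. Then for all vertices s₁, s₂ and every edge e of G such that s₁ and s₂ are connected in G \ {e}: s₁ and s₂ are connected in (T_{s₁} ∪ T_{s₂}) \ {e} and dist_{(T_{s₁} ∪ T_{s₂}) \ {e}}(s₁,s₂) = dist_{G \ {e}}(s₁,s₂), where T_{s₁} ∪ T_{s₂} denotes the subgraph of G whose edge set is the union of the edge sets of T_{s₁} and T_{s₂}. -/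
open SimpleGraph

/-- Let `π` be a tiebreaking scheme on a finite graph `G` with the
restoration-by-concatenation property, and for each vertex `s` let `T_s` be the subgraph of
`G` whose edges are the edges of the paths `π(s,x)` over all `x` connected to `s`. Then for
all `s₁, s₂` and every edge `e` with `s₁, s₂` connected in `G \ {e}`, the vertices `s₁, s₂`
are connected in `(T_{s₁} ∪ T_{s₂}) \ {e}` with the same distance as in `G \ {e}`. -/
theorem statement15 {V : Type*} [Fintype V] (G : SimpleGraph V) (π : TieBreaking G)
    (hres : ∀ (s t : V) (e : Sym2 V), e ∈ G.edgeSet →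
      (G.deleteEdges {e}).Reachable s t →
      ∃ (x : V) (h1 : G.Reachable s x) (h2 : G.Reachable t x),
        e ∉ (π.path s x h1).edges ∧ e ∉ (π.path t x h2).edges ∧
        (π.path s x h1).length + (π.path t x h2).length = (G.deleteEdges {e}).dist s t)
    (T : V → SimpleGraph V)
    (hT : ∀ s : V, T s = SimpleGraph.fromEdgeSet
      {e | ∃ (x : V) (h : G.Reachable s x), e ∈ (π.path s x h).edges}) :
    ∀ (s₁ s₂ : V) (e : Sym2 V), e ∈ G.edgeSet → (G.deleteEdges {e}).Reachable s₁ s₂ →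
      ((T s₁ ⊔ T s₂).deleteEdges {e}).Reachable s₁ s₂ ∧
      ((T s₁ ⊔ T s₂).deleteEdges {e}).dist s₁ s₂ = (G.deleteEdges {e}).dist s₁ s₂ := by

  intro s₁ s₂ e he hreach
  obtain ⟨x, h1, h2, he1, he2, hlen⟩ := hres s₁ s₂ e he hreach
  set H := (T s₁ ⊔ T s₂).deleteEdges {e} with hH
  -- T s ≤ G
  have hTle : ∀ s : V, T s ≤ G := by
    intro s
    rw [hT s]
    calc SimpleGraph.fromEdgeSet _ ≤ SimpleGraph.fromEdgeSet G.edgeSet := by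
          apply SimpleGraph.fromEdgeSet_mono
          rintro e' ⟨x, hx, hmem⟩
          exact (π.path s x hx).edges_subset_edgeSet hmem
      _ = G := SimpleGraph.fromEdgeSet_edgeSet G
  have hHle : H ≤ G.deleteEdges {e} :=
    SimpleGraph.deleteEdges_mono (sup_le (hTle s₁) (hTle s₂))
  -- the concatenated walk lies in H
  have hedge1 : ∀ e' ∈ (π.path s₁ x h1).edges, e' ∈ H.edgeSet := by
    intro e' hmem
    rw [hH, SimpleGraph.edgeSet_deleteEdges]
    constructor
    · rw [SimpleGraph.edgeSet_sup]
      left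
      rw [hT s₁, SimpleGraph.edgeSet_fromEdgeSet]
      refine ⟨⟨x, h1, hmem⟩, ?_⟩
      exact fun hd => (G.not_isDiag_of_mem_edgeSet ((π.path s₁ x h1).edges_subset_edgeSet hmem)) hd
    · simp only [Set.mem_singleton_iff]
      rintro rfl; exact he1 hmem
  have hedge2 : ∀ e' ∈ (π.path s₂ x h2).edges, e' ∈ H.edgeSet := by
    intro e' hmem
    rw [hH, SimpleGraph.edgeSet_deleteEdges]
    constructor
    · rw [SimpleGraph.edgeSet_sup]
      right
      rw [hT s₂, SimpleGraph.edgeSet_fromEdgeSet]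
      refine ⟨⟨x, h2, hmem⟩, ?_⟩
      exact fun hd => (G.not_isDiag_of_mem_edgeSet ((π.path s₂ x h2).edges_subset_edgeSet hmem)) hd
    · simp only [Set.mem_singleton_iff]
      rintro rfl; exact he2 hmem
  have hedgew : ∀ e' ∈ ((π.path s₁ x h1).append (π.path s₂ x h2).reverse).edges,
      e' ∈ H.edgeSet := by
    intro e' hmem
    rw [SimpleGraph.Walk.edges_append] at hmem
    rcases List.mem_append.mp hmem with h | h
    · exact hedge1 e' h
    · exact hedge2 e' (by rw [SimpleGraph.Walk.edges_reverse] at h; exact List.mem_reverse.mp h)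
  set w := ((π.path s₁ x h1).append (π.path s₂ x h2).reverse).transfer H hedgew with hw
  have hwlen : w.length = (G.deleteEdges {e}).dist s₁ s₂ := by
    rw [hw, SimpleGraph.Walk.length_transfer, SimpleGraph.Walk.length_append,
      SimpleGraph.Walk.length_reverse]
    exact hlen
  have hreachH : H.Reachable s₁ s₂ := ⟨w⟩
  refine ⟨hreachH, le_antisymm ?_ ?_⟩
  · calc H.dist s₁ s₂ ≤ w.length := SimpleGraph.dist_le w
      _ = _ := hwlen
  · obtain ⟨p, hp⟩ := hreachH.exists_walk_length_eq_dist
    calc (G.deleteEdges {e}).dist s₁ s₂ ≤ (p.mapLe hHle).length := SimpleGraph.dist_le _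
      _ = p.length := SimpleGraph.Walk.length_map _ _
      _ = H.dist s₁ s₂ := hp
end

section
/- Let G be a finite simple undirected unweighted graph, let π be a restorable RPTS on G, let S ⊆ V be a vertex subset, and let f ≥ 0 be an integer. Then the subgraph H of G formed by overlaying all S×V replacement paths of π under at most f faults is an (f+1)-FT S×S distance preserver of G. -/
open SimpleGraph

/-- For a restorable RPTS `π` on a finite graph `G`, a vertex subset `S`,
and an integer `f ≥ 0`, the subgraph of `G` formed by overlaying all `S × V` replacement
paths of `π` under at most `f` faults is an `(f+1)`-FT `S × S` distance preserver of `G`. -/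
theorem statement17 {V : Type*} [Fintype V] (G : SimpleGraph V) (π : RPTS G)
    (hres : π.Restorable) (S : Set V) (f : ℕ) :
    IsFTPreserver G (SimpleGraph.fromEdgeSet (overlayEdges π S f)) S S (f + 1) := by
  set H : SimpleGraph V := SimpleGraph.fromEdgeSet (overlayEdges π S f) with hH
  have hover : overlayEdges π S f ⊆ G.edgeSet := by
    rintro e ⟨s, _, v, F, _, _, h, he⟩
    have := (π.path s v F h).edges_subset_edgeSet he
    rw [SimpleGraph.edgeSet_deleteEdges] at this
    exact this.1
  have hHG : H ≤ G := by
    intro a b hab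
    rw [hH, SimpleGraph.fromEdgeSet_adj] at hab
    exact (G.mem_edgeSet).1 (hover hab.1)
  have hdel : ∀ F : Set (Sym2 V), H.deleteEdges F ≤ G.deleteEdges F := by
    intro F a b hab
    rw [SimpleGraph.deleteEdges_adj] at hab ⊢
    exact ⟨hHG hab.1, hab.2⟩
  -- key: existence of a walk in H \ F of length dist_{G\F}
  have key : ∀ F : Set (Sym2 V), F ⊆ G.edgeSet → F.ncard ≤ f + 1 → ∀ s ∈ S, ∀ t ∈ S,
      ∀ h : (G.deleteEdges F).Reachable s t,
      ∃ p : (H.deleteEdges F).Walk s t, p.length = (G.deleteEdges F).dist s t := by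
    intro F hFsub hFcard s hs t ht h
    rcases F.eq_empty_or_nonempty with hFe | hFne
    · subst hFe
      set p := π.path s t ∅ h with hp
      have hmem : ∀ e ∈ p.edges, e ∈ (H.deleteEdges (∅ : Set (Sym2 V))).edgeSet := by
        intro e he
        have heG : e ∈ G.edgeSet := by
          have := p.edges_subset_edgeSet he
          rw [SimpleGraph.edgeSet_deleteEdges] at this
          exact this.1
        rw [SimpleGraph.edgeSet_deleteEdges, hH, SimpleGraph.edgeSet_fromEdgeSet]
        refine ⟨⟨⟨s, hs, t, ∅, by simp, by simp, h, he⟩, ?_⟩, by simp⟩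
        exact G.not_isDiag_of_mem_edgeSet heG
      refine ⟨p.transfer _ hmem, ?_⟩
      rw [SimpleGraph.Walk.length_transfer]
      exact π.length_eq s t ∅ h
    · obtain ⟨x, F', hF'ss, h1, h2, havoid, hlen⟩ := hres s t F hFne h
      have hF'sub : F' ⊆ G.edgeSet := hF'ss.subset.trans hFsub
      have hF'card : F'.ncard ≤ f := by
        have hfin : F.Finite := (G.edgeSet.toFinite).subset hFsub
        have := Set.ncard_lt_ncard hF'ss hfin
        omega
      set p := (π.path s x F' h1).append (π.path t x F' h2).reverse with hp
      have hmem : ∀ e ∈ p.edges, e ∈ (H.deleteEdges F).edgeSet := by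
        intro e he
        have heG : e ∈ G.edgeSet := by
          have := p.edges_subset_edgeSet he
          rw [SimpleGraph.edgeSet_deleteEdges] at this
          exact this.1
        rw [SimpleGraph.edgeSet_deleteEdges, hH, SimpleGraph.edgeSet_fromEdgeSet]
        refine ⟨⟨?_, G.not_isDiag_of_mem_edgeSet heG⟩, havoid e he⟩
        rw [hp, SimpleGraph.Walk.edges_append, List.mem_append] at he
        rcases he with he | he
        · exact ⟨s, hs, x, F', hF'sub, hF'card, h1, he⟩
        · rw [SimpleGraph.Walk.edges_reverse, List.mem_reverse] at he
          exact ⟨t, ht, x, F', hF'sub, hF'card, h2, he⟩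
      refine ⟨p.transfer _ hmem, ?_⟩
      rw [SimpleGraph.Walk.length_transfer]
      exact hlen
  refine ⟨hHG, fun F hFsub hFcard s hs t ht => ?_⟩
  have fwd : (G.deleteEdges F).Reachable s t → (H.deleteEdges F).Reachable s t := by
    intro h
    obtain ⟨p, _⟩ := key F hFsub hFcard s hs t ht h
    exact p.reachable
  refine ⟨⟨fun h => h.mono (hdel F), fwd⟩, fun h => ?_⟩
  obtain ⟨p, hplen⟩ := key F hFsub hFcard s hs t ht h
  have h1 : (H.deleteEdges F).dist s t ≤ (G.deleteEdges F).dist s t := by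
    calc (H.deleteEdges F).dist s t ≤ p.length := SimpleGraph.dist_le p
    _ = _ := hplen
  have h2 : (G.deleteEdges F).dist s t ≤ (H.deleteEdges F).dist s t := by
    obtain ⟨q, hq⟩ := (fwd h).exists_walk_length_eq_dist
    have hmem : ∀ e ∈ q.edges, e ∈ (G.deleteEdges F).edgeSet := by
      intro e he
      exact (SimpleGraph.edgeSet_subset_edgeSet.2 (hdel F)) (q.edges_subset_edgeSet he)
    calc (G.deleteEdges F).dist s t ≤ (q.transfer _ hmem).length := SimpleGraph.dist_le _
    _ = (H.deleteEdges F).dist s t := by rw [SimpleGraph.Walk.length_transfer]; exact hq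
  omega
end
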